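/- arXiv:1703.05233 — 10 statements merged into one kernel-verified Lean document; each statement's English description precedes it below -/
import Mathlib

section
/- Let 𝒫 be a finite set of maps from ℝ^n to ℝ^n, each of which is a paracontraction with respect to a fixed norm ‖·‖ on ℝ^n, and suppose all maps in 𝒫 share at least one common fixed point. Let P_1, P_2, … be an arbitrary sequence of maps drawn from 𝒫 and define the iteration x(t+1) = P_t(x(t)) for t ≥ 1 from an arbitrary initial vector x(1) ∈ ℝ^n. Then x(t) converges as t → ∞ to a point which is a common fixed point of all those maps in 𝒫 that occur infinitely often in the sequence P_1, P_2, …. -/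
open Filter Topology Finset
open scoped ENNReal

def IsNormOn {E : Type*} [AddCommGroup E] [Module ℝ E] (N : E → ℝ) : Prop :=
  (∀ x, N x = 0 ↔ x = 0) ∧
  (∀ (c : ℝ) (x : E), N (c • x) = |c| * N x) ∧
  (∀ x y : E, N (x + y) ≤ N x + N y)

def IsParacontraction {E : Type*} [AddCommGroup E] [Module ℝ E] [TopologicalSpace E]
    (N : E → ℝ) (P : E → E) : Prop :=
  Continuous P ∧ ∀ x y : E, P x ≠ x → P y = y → N (P x - y) < N (x - y)

def QuasiNonexpansive {E : Type*} [AddCommGroup E] (N : E → ℝ) (P : E → E) : Prop :=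
  ∀ x y : E, P y = y → N (P x - y) ≤ N (x - y)

noncomputable def pnorm {n : ℕ} (p : ℝ) (x : Fin n → ℝ) : ℝ :=
  (∑ i, |x i| ^ p) ^ (1 / p)

noncomputable def pnormE {n : ℕ} (p : ℝ≥0∞) (x : Fin n → ℝ) : ℝ :=
  if p = ⊤ then ⨆ i, |x i| else (∑ i, |x i| ^ p.toReal) ^ (1 / p.toReal)

noncomputable def mixed22 {m n : ℕ} (x : Fin m → Fin n → ℝ) : ℝ :=
  pnorm 2 (fun i => pnorm 2 (x i))

noncomputable def mixedPInf {m n : ℕ} (p : ℝ) (x : Fin m → Fin n → ℝ) : ℝ :=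
  ⨆ i, pnorm p (x i)

noncomputable def mixedEInf {m n : ℕ} (p : ℝ≥0∞) (x : Fin m → Fin n → ℝ) : ℝ :=
  ⨆ i, pnormE p (x i)

def IsStochastic {m : ℕ} (S : Matrix (Fin m) (Fin m) ℝ) : Prop :=
  (∀ i j, 0 ≤ S i j) ∧ ∀ i, ∑ j, S i j = 1

def IsDoublyStochastic {m : ℕ} (S : Matrix (Fin m) (Fin m) ℝ) : Prop :=
  IsStochastic S ∧ ∀ j, ∑ i, S i j = 1

def kron {m n : ℕ} (S : Matrix (Fin m) (Fin m) ℝ) (x : Fin m → Fin n → ℝ) :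
    Fin m → Fin n → ℝ :=
  fun i => ∑ j, S i j • x j

def stackMap {m n : ℕ} (M : Fin m → (Fin n → ℝ) → (Fin n → ℝ)) :
    (Fin m → Fin n → ℝ) → (Fin m → Fin n → ℝ) :=
  fun x i => M i (x i)

def consensusSet (m n : ℕ) : Set (Fin m → Fin n → ℝ) :=
  {x | ∀ i j : Fin m, x i = x j}

def StronglyConnected {V : Type*} (G : V → V → Prop) : Prop :=
  ∀ i j : V, Relation.ReflTransGen G i j

def graphComp {V : Type*} (Gq Gp : V → V → Prop) : V → V → Prop :=
  fun i j => ∃ k, Gp i k ∧ Gq k j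

def composeChain {m : ℕ} (G : ℕ → Fin m → Fin m → Prop) (a : ℕ) :
    ℕ → (Fin m → Fin m → Prop)
  | 0 => G a
  | k + 1 => graphComp (G (a + (k + 1))) (composeChain G a k)

def mapChain {α : Type*} (F : ℕ → α → α) : ℕ → α → α
  | 0 => id
  | k + 1 => F (k + 1) ∘ mapChain F k

noncomputable def Phi {m : ℕ} (S : ℕ → Matrix (Fin m) (Fin m) ℝ) (τ t : ℕ) :
    Matrix (Fin m) (Fin m) ℝ :=
  (List.range (t - τ)).foldl (fun A k => S (τ + k + 1) * A) 1

/-!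
Fix a common fixed point `y`. Paracontractions are quasi-nonexpansive, so `N (x t - y)`
decreases to some `L`, the orbit is bounded and has a limit point `z`. If a map `R` is applied
at times `u` with `x u → z`, then `z` and `R z = lim x (u + 1)` both lie at `N`-distance `L`
from `y`, and the strict inequality of a paracontraction forces `R z = z`. Were `z` moved by
infinitely many `P t`, the first such times after the approaches to `z` would again approach
`z` (no map in between moves `z`, so `N (x t - z)` cannot grow), and since `Ps` is finite one map moving `z` would be applied infinitely often along them.
So eventually every `P t` fixes `z`; from then on `N (x t - z)` is nonincreasing, and a
subsequence of it tends to `0`.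
-/

namespace IsNormOn

section AddCommGroup

variable {E : Type*} [AddCommGroup E] [Module ℝ E] {N : E → ℝ}

def toSeminorm (hN : IsNormOn N) : Seminorm ℝ E :=
  Seminorm.of N hN.2.2 fun c x => by rw [hN.2.1, Real.norm_eq_abs]

lemma nonneg (hN : IsNormOn N) (x : E) : 0 ≤ N x := apply_nonneg hN.toSeminorm x

lemma map_zero (hN : IsNormOn N) : N 0 = 0 := (hN.1 0).2 rfl

end AddCommGroup

variable {E : Type*} [NormedAddCommGroup E] [NormedSpace ℝ E] [FiniteDimensional ℝ E]
  {N : E → ℝ}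

lemma continuous (hN : IsNormOn N) : Continuous N :=
  continuousOn_univ.1 (hN.toSeminorm.convexOn.continuousOn isOpen_univ)

lemma exists_pos_mul_norm_le (hN : IsNormOn N) : ∃ c > 0, ∀ x, c * ‖x‖ ≤ N x := by
  rcases subsingleton_or_nontrivial E with _ | _
  · exact ⟨1, one_pos, fun x => by simp [Subsingleton.elim x 0, hN.map_zero]⟩
  obtain ⟨w, hw, hmin⟩ := (isCompact_sphere (0 : E) 1).exists_isMinOn
    (NormedSpace.sphere_nonempty.2 zero_le_one) hN.continuous.continuousOn
  have hw0 : w ≠ 0 := ne_zero_of_mem_unit_sphere ⟨w, hw⟩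
  refine ⟨N w, (hN.nonneg w).lt_of_ne fun h => hw0 ((hN.1 w).1 h.symm), fun x => ?_⟩
  rcases eq_or_ne x 0 with rfl | hx
  · simp [hN.map_zero]
  have hx' : ‖x‖ ≠ 0 := norm_ne_zero_iff.2 hx
  calc N w * ‖x‖ ≤ N (‖x‖⁻¹ • x) * ‖x‖ :=
        mul_le_mul_of_nonneg_right (hmin (by simp [norm_smul, hx'])) (norm_nonneg x)
    _ = N x := by rw [hN.2.1, abs_inv, abs_norm, mul_comm, ← mul_assoc, mul_inv_cancel₀ hx',
        one_mul]

lemma tendsto_iff {ι : Type*} {l : Filter ι} (hN : IsNormOn N) {f : ι → E} {w : E} :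
    Tendsto f l (𝓝 w) ↔ Tendsto (fun i => N (f i - w)) l (𝓝 0) := by
  refine ⟨fun h => ?_, fun h => ?_⟩
  · have hc : Continuous fun v => N (v - w) := hN.continuous.comp (continuous_sub_right w)
    exact (hc.tendsto' w 0 (by simp [hN.map_zero])).comp h
  · obtain ⟨c, hc, hcN⟩ := hN.exists_pos_mul_norm_le
    rw [tendsto_iff_norm_sub_tendsto_zero]
    refine squeeze_zero (fun _ => norm_nonneg _) (fun i => (le_div_iff₀' hc).2 (hcN _)) ?_
    simpa using h.div_const c

lemma exists_subseq_tendsto (hN : IsNormOn N) {x : ℕ → E} {y : E} {R : ℝ}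
    (hR : ∀ t, N (x t - y) ≤ R) :
    ∃ z, ∃ φ : ℕ → ℕ, StrictMono φ ∧ Tendsto (x ∘ φ) atTop (𝓝 z) := by
  obtain ⟨c, hc, hcN⟩ := hN.exists_pos_mul_norm_le
  have hball : ∀ t, x t ∈ Metric.closedBall y (R / c) := fun t => by
    rw [Metric.mem_closedBall, dist_eq_norm, le_div_iff₀' hc]
    exact (hcN _).trans (hR t)
  obtain ⟨z, -, φ, hφ, hz⟩ := tendsto_subseq_of_bounded Metric.isBounded_closedBall hball
  exact ⟨z, φ, hφ, hz⟩

end IsNormOn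

lemma IsParacontraction.quasiNonexpansive {E : Type*} [AddCommGroup E] [Module ℝ E]
    [TopologicalSpace E] {N : E → ℝ} {P : E → E} (hP : IsParacontraction N P) :
    QuasiNonexpansive N P := fun x y hy => by
  rcases eq_or_ne (P x) x with hx | hx
  · rw [hx]
  · exact (hP.2 x y hx hy).le

lemma Set.Finite.exists_frequently_eq {α ι : Type*} {s : Set α} (hs : s.Finite)
    {l : Filter ι} [l.NeBot] {f : ι → α} (hf : ∀ i, f i ∈ s) : ∃ a ∈ s, ∃ᶠ i in l, f i = a := by
  by_contra! h
  obtain ⟨i, hi⟩ := ((eventually_all_finite hs).2 h).exists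
  exact hi _ (hf i) rfl

lemma Nat.exists_least_ge_of_frequently {p : ℕ → Prop} (hp : ∃ᶠ t in atTop, p t) (a : ℕ) :
    ∃ m, a ≤ m ∧ p m ∧ ∀ t, a ≤ t → t < m → ¬ p t := by
  classical
  have h : ∃ m, a ≤ m ∧ p m := (hp.and_eventually (eventually_ge_atTop a)).exists.imp
    fun _ h => ⟨h.2, h.1⟩
  exact ⟨Nat.find h, (Nat.find_spec h).1, (Nat.find_spec h).2,
    fun t hat htm hpt => Nat.find_min h htm ⟨hat, hpt⟩⟩

section Orbit

variable {E : Type*} {N : E → ℝ} {P : ℕ → E → E} {x : ℕ → E}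

lemma orbit_sub_le_of_fixed [AddCommGroup E] (hq : ∀ t, QuasiNonexpansive N (P t))
    (hx : ∀ t, x (t + 1) = P t (x t)) {w : E} {a b : ℕ} (hab : a ≤ b)
    (hw : ∀ t, a ≤ t → t < b → P t w = w) : N (x b - w) ≤ N (x a - w) := by
  induction b, hab using Nat.le_induction with
  | base => exact le_rfl
  | succ b hab ih =>
    calc N (x (b + 1) - w) ≤ N (x b - w) := by
          rw [hx]; exact hq b _ _ (hw b hab b.lt_succ_self)
      _ ≤ N (x a - w) := ih fun t hat htb => hw t hat (htb.trans b.lt_succ_self)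

lemma antitone_orbit_sub [AddCommGroup E] (hq : ∀ t, QuasiNonexpansive N (P t))
    (hx : ∀ t, x (t + 1) = P t (x t)) {y : E} (hy : ∀ t, P t y = y) :
    Antitone fun t => N (x t - y) :=
  antitone_nat_of_succ_le fun t => by rw [hx]; exact hq t _ _ (hy t)

variable [NormedAddCommGroup E] [NormedSpace ℝ E] [FiniteDimensional ℝ E]

lemma IsParacontraction.fixed_of_tendsto_orbit (hN : IsNormOn N)
    (hx : ∀ t, x (t + 1) = P t (x t)) {R : E → E} (hR : IsParacontraction N R) {y : E}
    (hy : R y = y) {L : ℝ} (hL : Tendsto (fun t => N (x t - y)) atTop (𝓝 L))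
    {ι : Type*} {l : Filter ι} [l.NeBot] {u : ι → ℕ} (hu : Tendsto u l atTop)
    (hPu : ∀ᶠ i in l, P (u i) = R) {z : E} (hz : Tendsto (x ∘ u) l (𝓝 z)) : R z = z := by
  by_contra hne
  have hNy : Continuous fun v => N (v - y) := hN.continuous.comp (continuous_sub_right y)
  have hzL : N (z - y) = L := tendsto_nhds_unique ((hNy.tendsto z).comp hz) (hL.comp hu)
  have hRz : Tendsto (fun i => x (u i + 1)) l (𝓝 (R z)) := by
    refine ((hR.1.tendsto z).comp hz).congr' ?_
    filter_upwards [hPu] with i hi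
    simp [hx, hi]
  have hRzL : N (R z - y) = L := tendsto_nhds_unique ((hNy.tendsto _).comp hRz)
    (hL.comp ((tendsto_add_atTop_nat 1).comp hu))
  exact (hR.2 z y hne hy).ne (hRzL.trans hzL.symm)

lemma eventually_fixed_of_tendsto_subseq (hN : IsNormOn N)
    {Ps : Set (E → E)} (hfin : Ps.Finite) (hpc : ∀ Q ∈ Ps, IsParacontraction N Q)
    {y : E} (hy : ∀ Q ∈ Ps, Q y = y) (hP : ∀ t, P t ∈ Ps) (hx : ∀ t, x (t + 1) = P t (x t))
    {ψ : ℕ → ℕ} (hψ : Tendsto ψ atTop atTop) {z : E} (hz : Tendsto (x ∘ ψ) atTop (𝓝 z)) :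
    ∀ᶠ t in atTop, P t z = z := by
  have hq : ∀ t, QuasiNonexpansive N (P t) := fun t => (hpc _ (hP t)).quasiNonexpansive
  have hL := tendsto_atTop_ciInf (antitone_orbit_sub hq hx fun t => hy _ (hP t))
    ⟨0, Set.forall_mem_range.2 fun t => hN.nonneg _⟩
  by_contra hbad
  choose m hψm hmoved hmin using fun k =>
    Nat.exists_least_ge_of_frequently (not_eventually.1 hbad) (ψ k)
  have hxm : Tendsto (x ∘ m) atTop (𝓝 z) := hN.tendsto_iff.2 <|
    squeeze_zero (fun _ => hN.nonneg _)
      (fun k => orbit_sub_le_of_fixed hq hx (hψm k) fun t h₁ h₂ => not_not.1 (hmin k t h₁ h₂))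
      (hN.tendsto_iff.1 hz)
  have hm : Tendsto m atTop atTop := tendsto_atTop_mono hψm hψ
  obtain ⟨Q, hQ, hfreq⟩ := hfin.exists_frequently_eq (l := atTop) fun k => hP (m k)
  have : NeBot (atTop ⊓ 𝓟 {k | P (m k) = Q}) := frequently_iff_neBot.1 hfreq
  have hQz : Q z = z := (hpc Q hQ).fixed_of_tendsto_orbit hN hx (hy Q hQ) hL
    (hm.mono_left inf_le_left) (mem_inf_of_right (mem_principal_self _))
    (hxm.mono_left inf_le_left)
  obtain ⟨k, hk⟩ := hfreq.exists
  exact hmoved k (hk ▸ hQz)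

lemma tendsto_orbit_of_eventually_fixed (hN : IsNormOn N) (hq : ∀ t, QuasiNonexpansive N (P t))
    (hx : ∀ t, x (t + 1) = P t (x t)) {ψ : ℕ → ℕ} (hψ : Tendsto ψ atTop atTop) {z : E}
    (hz : Tendsto (x ∘ ψ) atTop (𝓝 z)) (hfix : ∀ᶠ t in atTop, P t z = z) :
    Tendsto x atTop (𝓝 z) := by
  obtain ⟨T, hT⟩ := eventually_atTop.1 hfix
  refine hN.tendsto_iff.2 (tendsto_order.2 ⟨fun a ha => Eventually.of_forall fun t =>
    ha.trans_le (hN.nonneg _), fun ε hε => ?_⟩)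
  obtain ⟨k, hk, hkT⟩ :=
    (((hN.tendsto_iff.1 hz).eventually (gt_mem_nhds hε)).and (hψ.eventually_ge_atTop T)).exists
  filter_upwards [eventually_ge_atTop (ψ k)] with t ht
  exact (orbit_sub_le_of_fixed hq hx ht fun s hs _ => hT s (hkT.trans hs)).trans_lt hk

theorem exists_tendsto_orbit_of_paracontraction (hN : IsNormOn N)
    {Ps : Set (E → E)} (hfin : Ps.Finite) (hpc : ∀ Q ∈ Ps, IsParacontraction N Q)
    (hcommon : ∃ y, ∀ Q ∈ Ps, Q y = y) (hP : ∀ t, P t ∈ Ps)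
    (hx : ∀ t, x (t + 1) = P t (x t)) :
    ∃ z, Tendsto x atTop (𝓝 z) ∧ ∀ᶠ t in atTop, P t z = z := by
  obtain ⟨y, hy⟩ := hcommon
  have hq : ∀ t, QuasiNonexpansive N (P t) := fun t => (hpc _ (hP t)).quasiNonexpansive
  obtain ⟨z, φ, hφ, hz⟩ := hN.exists_subseq_tendsto
    fun t => antitone_orbit_sub hq hx (fun t => hy _ (hP t)) (Nat.zero_le t)
  have hfix := eventually_fixed_of_tendsto_subseq hN hfin hpc hy hP hx hφ.tendsto_atTop hz
  exact ⟨z, tendsto_orbit_of_eventually_fixed hN hq hx hφ.tendsto_atTop hz hfix, hfix⟩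

end Orbit

theorem stmt0 {n : ℕ} (N : (Fin n → ℝ) → ℝ) (hN : IsNormOn N)
    (Ps : Set ((Fin n → ℝ) → (Fin n → ℝ))) (hfin : Ps.Finite)
    (hpc : ∀ P ∈ Ps, IsParacontraction N P)
    (hcommon : ∃ y, ∀ P ∈ Ps, P y = y)
    (P : ℕ → (Fin n → ℝ) → (Fin n → ℝ)) (hP : ∀ t, P t ∈ Ps)
    (x : ℕ → Fin n → ℝ) (hx : ∀ t, 1 ≤ t → x (t + 1) = P t (x t)) :
    ∃ z : Fin n → ℝ, Tendsto x atTop (𝓝 z) ∧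
      ∀ Q ∈ Ps, {t : ℕ | 1 ≤ t ∧ P t = Q}.Infinite → Q z = z := by
  obtain ⟨z, hz, hfix⟩ := exists_tendsto_orbit_of_paracontraction (x := fun t => x (t + 1))
    hN hfin hpc hcommon (fun t => hP (t + 1)) fun t => hx (t + 1) le_add_self
  refine ⟨z, (tendsto_add_atTop_iff_nat 1).1 hz, fun Q _ hQ => ?_⟩
  obtain ⟨t, ⟨ht, rfl⟩, htz⟩ := ((Nat.frequently_atTop_iff_infinite.2 hQ).and_eventually
    ((tendsto_sub_atTop_nat 1).eventually hfix)).exists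
  rwa [Nat.sub_add_cancel ht] at htz
end

section
/- Suppose P_1 : ℝ^n → ℝ^n and P_2 : ℝ^n → ℝ^n are each paracontractions with respect to the same norm ‖·‖ on ℝ^n, and suppose F(P_1) ∩ F(P_2) ≠ ∅. Then the composition P_1 ∘ P_2 is a paracontraction with respect to ‖·‖, and moreover F(P_1 ∘ P_2) = F(P_1) ∩ F(P_2). -/
open Filter Topology Finset
open scoped ENNReal

theorem stmt1 {n : ℕ} (N : (Fin n → ℝ) → ℝ) (hN : IsNormOn N)
    (P₁ P₂ : (Fin n → ℝ) → (Fin n → ℝ))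
    (h1 : IsParacontraction N P₁) (h2 : IsParacontraction N P₂)
    (hc : ∃ y, P₁ y = y ∧ P₂ y = y) :
    IsParacontraction N (P₁ ∘ P₂) ∧
      {x | (P₁ ∘ P₂) x = x} = {x | P₁ x = x} ∩ {x | P₂ x = x} := by
  obtain ⟨y, hy1, hy2⟩ := hc
  -- quasi-nonexpansive versions
  have q1 : ∀ x z, P₁ z = z → N (P₁ x - z) ≤ N (x - z) := by
    intro x z hz
    by_cases hx : P₁ x = x
    · rw [hx]
    · exact le_of_lt (h1.2 x z hx hz)
  have q2 : ∀ x z, P₂ z = z → N (P₂ x - z) ≤ N (x - z) := by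
    intro x z hz
    by_cases hx : P₂ x = x
    · rw [hx]
    · exact le_of_lt (h2.2 x z hx hz)
  -- fixed points of composition are common fixed points
  have key : ∀ x, P₁ (P₂ x) = x → P₁ x = x ∧ P₂ x = x := by
    intro x hx
    by_cases h2x : P₂ x = x
    · refine ⟨?_, h2x⟩
      rw [← h2x]; rw [h2x] at hx ⊢; exact hx
    · exfalso
      have hlt : N (P₂ x - y) < N (x - y) := h2.2 x y h2x hy2
      have hle : N (P₁ (P₂ x) - y) ≤ N (P₂ x - y) := q1 (P₂ x) y hy1
      rw [hx] at hle
      exact absurd (lt_of_le_of_lt hle hlt) (lt_irrefl _)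
  have hset : {x | (P₁ ∘ P₂) x = x} = {x | P₁ x = x} ∩ {x | P₂ x = x} := by
    ext x
    simp only [Set.mem_setOf_eq, Set.mem_inter_iff, Function.comp_apply]
    constructor
    · exact key x
    · rintro ⟨h1x, h2x⟩; rw [h2x, h1x]
  refine ⟨⟨h1.1.comp h2.1, ?_⟩, hset⟩
  intro x z hx hz
  obtain ⟨hz1, hz2⟩ := key z hz
  simp only [Function.comp_apply] at hx ⊢
  by_cases h2x : P₂ x = x
  · rw [h2x] at hx ⊢
    exact h1.2 x z hx hz1
  · calc N (P₁ (P₂ x) - z) ≤ N (P₂ x - z) := q1 (P₂ x) z hz1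
      _ < N (x - z) := h2.2 x z h2x hz2
end

section
/- Suppose P : ℝ^n → ℝ^n is a paracontraction with respect to some norm ‖·‖ on ℝ^n. Then the fixed-point set F(P) = {x : x = P(x)} is both closed and convex. -/
open Filter Topology Finset
open scoped ENNReal

theorem stmt2 {n : ℕ} (N : (Fin n → ℝ) → ℝ) (hN : IsNormOn N)
    (P : (Fin n → ℝ) → (Fin n → ℝ)) (hP : IsParacontraction N P) :
    IsClosed {x | P x = x} ∧ Convex ℝ {x | P x = x} := by
  obtain ⟨hzero, hsmul, htri⟩ := hN
  have hneg : ∀ v, N (-v) = N v := by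
    intro v
    have := hsmul (-1) v
    simpa using this
  constructor
  · exact isClosed_eq hP.1 continuous_id
  · intro x hx y hy a b ha hb hab
    simp only [Set.mem_setOf_eq] at hx hy ⊢
    set z := a • x + b • y with hz
    by_contra hne
    have h1 : N (P z - x) < N (z - x) := hP.2 z x hne hx
    have h2 : N (P z - y) < N (z - y) := hP.2 z y hne hy
    have hzx : z - x = b • (y - x) := by
      rw [hz, show a = 1 - b from by linarith]; module
    have hzy : z - y = a • (x - y) := by
      rw [hz, show b = 1 - a from by linarith]; module
    have e1 : N (z - x) = b * N (y - x) := by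
      rw [hzx, hsmul, abs_of_nonneg hb]
    have e2 : N (z - y) = a * N (x - y) := by
      rw [hzy, hsmul, abs_of_nonneg ha]
    have hxy : N (y - x) = N (x - y) := by
      rw [← hneg (x - y)]; ring_nf
    have htr : N (x - y) ≤ N (P z - y) + N (P z - x) := by
      have := htri (P z - y) (-(P z - x))
      have h' : (P z - y) + (-(P z - x)) = x - y := by abel
      rw [h', hneg] at this
      exact this
    have : N (x - y) < N (x - y) := by
      calc N (x - y) ≤ N (P z - y) + N (P z - x) := htr
        _ < N (z - y) + N (z - x) := by linarith
        _ = a * N (x - y) + b * N (x - y) := by rw [e1, e2, hxy]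
        _ = N (x - y) := by rw [← add_mul, hab, one_mul]
    exact lt_irrefl _ this
end

section
/- Let 1 < p < ∞ and let M_1, …, M_m : ℝ^n → ℝ^n (with m > 1) be paracontractions with respect to the p-norm ‖·‖_p on ℝ^n sharing at least one common fixed point. For each integer t ≥ 1 and each i ∈ {1,…,m}, let N_i(t) ⊆ {1,…,m} be a set of neighbor labels with i ∈ N_i(t), and let N(t) denote the directed graph on vertices {1,…,m} having an arc from j to i exactly when j ∈ N_i(t). Assume the sequence N(1), N(2), … is repeatedly jointly strongly connected: there exist positive integers l and ρ_0 such that for every integer k > 0, the composed graph N(kl+ρ_0−1) ∘ N(kl+ρ_0−2) ∘ ⋯ ∘ N((k−1)l+ρ_0) is strongly connected. Then for arbitrary initial vectors x_1(1), …, x_m(1) ∈ ℝ^n, the iterates defined by x_i(t+1) = M_i( (1/|N_i(t)|) · ∑_{j ∈ N_i(t)} x_j(t) ) for i ∈ {1,…,m} and t ≥ 1 all converge, as t → ∞, to one and the same limit, and this common limit is a common fixed point of M_1, …, M_m. -/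
open Filter Topology Finset
open scoped ENNReal

/-!
The largest distance `V t = maxᵢ ‖xᵢ(t) - y‖` to a common fixed point `y` is nonincreasing, since
neither averaging nor a paracontraction moves a point away from `y`; let `r` be its limit. Along a
subsequence of block starting times the states converge and the neighbour sets of the next `m + 1`
blocks are constant, so by continuity the limit state starts a trajectory of the same iteration on
which `V` stays equal to `r`. An agent strictly inside the ball of radius `r` would pull its
out-neighbours inside, and through `m` strongly connected blocks everybody; so during the first
block all agents stay on the sphere. Strict convexity of the `p`-norm (`1 < p < ∞`) and the strict
inequality defining a paracontraction then force neighbours to agree and every agent to be fixed: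
the limit state is a consensus at a common fixed point `z`. The monotonicity argument with `z` in
place of `y` turns convergence along the subsequence into convergence of the whole sequence.
-/

theorem abs_midpoint_rpow_lt {q : ℝ} (hq : 1 < q) {a b : ℝ} (hab : a ≠ b) :
    |2⁻¹ * a + 2⁻¹ * b| ^ q < 2⁻¹ * |a| ^ q + 2⁻¹ * |b| ^ q := by
  have hq0 : 0 < q := by linarith
  rcases eq_or_ne |a| |b| with habs | habs
  · have hb : a = -b := (abs_eq_abs.1 habs).resolve_left hab
    have ha0 : a ≠ 0 := fun h => hab (by linarith)
    rw [← habs, hb, show 2⁻¹ * -b + 2⁻¹ * b = 0 by ring, abs_zero, Real.zero_rpow hq0.ne',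
      ← add_mul, ← hb]
    norm_num
    exact Real.rpow_pos_of_pos (abs_pos.2 ha0) q
  · calc |2⁻¹ * a + 2⁻¹ * b| ^ q ≤ (2⁻¹ * |a| + 2⁻¹ * |b|) ^ q := by
          gcongr
          refine (abs_add_le _ _).trans_eq ?_
          simp [abs_mul]
      _ < 2⁻¹ * |a| ^ q + 2⁻¹ * |b| ^ q := by
          simpa using (strictConvexOn_rpow hq).2 (abs_nonneg a) (abs_nonneg b) habs
            (by norm_num : (0:ℝ) < 2⁻¹) (by norm_num : (0:ℝ) < 2⁻¹) (by norm_num)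

theorem PiLp.norm_rpow_eq_sum {ι : Type*} [Fintype ι] {β : ι → Type*}
    [∀ i, SeminormedAddCommGroup (β i)] {p : ℝ≥0∞} (hp : 0 < p.toReal) (f : PiLp p β) :
    ‖f‖ ^ p.toReal = ∑ i, ‖f i‖ ^ p.toReal := by
  rw [PiLp.norm_eq_sum hp, ← Real.rpow_mul (by positivity), one_div_mul_cancel hp.ne',
    Real.rpow_one]

theorem PiLp.strictConvexSpace_real {ι : Type*} [Fintype ι] {p : ℝ≥0∞} [Fact (1 ≤ p)]
    (hp : 1 < p) (hp' : p ≠ ∞) : StrictConvexSpace ℝ (PiLp p fun _ : ι => ℝ) := by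
  have hq : 1 < p.toReal := by
    simpa using (ENNReal.toReal_lt_toReal ENNReal.one_ne_top hp').2 hp
  have hq0 : 0 < p.toReal := by linarith
  have hsum (f : PiLp p fun _ : ι => ℝ) (hf : ‖f‖ = 1) : ∑ i, |f i| ^ p.toReal = 1 := by
    simpa [hf] using (PiLp.norm_rpow_eq_sum hq0 f).symm
  refine .of_norm_combo_lt_one fun x y hx hy hxy => ⟨2⁻¹, 2⁻¹, by norm_num, ?_⟩
  obtain ⟨i, hi⟩ : ∃ i, x i ≠ y i := by
    by_contra! h
    exact hxy (PiLp.ext h)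
  have hlt : ‖(2⁻¹ : ℝ) • x + (2⁻¹ : ℝ) • y‖ ^ p.toReal < 1 ^ p.toReal := by
    rw [PiLp.norm_rpow_eq_sum hq0, Real.one_rpow,
      show (1 : ℝ) = 2⁻¹ * ∑ j, |x j| ^ p.toReal + 2⁻¹ * ∑ j, |y j| ^ p.toReal by
        rw [hsum x hx, hsum y hy]; norm_num,
      Finset.mul_sum, Finset.mul_sum, ← Finset.sum_add_distrib]
    refine Finset.sum_lt_sum (fun j _ => ?_) ⟨i, Finset.mem_univ _, ?_⟩
    · rcases eq_or_ne (x j) (y j) with h | h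
      · norm_num [h, ← add_mul]
      · simpa using (abs_midpoint_rpow_lt hq h).le
    · simpa using abs_midpoint_rpow_lt hq hi
  exact (Real.rpow_lt_rpow_iff (norm_nonneg _) zero_le_one hq0).1 hlt

def trajectory {X : Type*} (F : ℕ → X → X) (x₀ : X) : ℕ → X
  | 0 => x₀
  | s + 1 => F s (trajectory F x₀ s)

theorem tendsto_trajectory {X : Type*} [TopologicalSpace X] {F : ℕ → X → X}
    (hF : ∀ s, Continuous (F s)) {L : ℕ} {u : ℕ → ℕ → X}
    (hu : ∀ k, ∀ s < L, u k (s + 1) = F s (u k s)) {a : X}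
    (ha : Tendsto (fun k => u k 0) atTop (𝓝 a)) :
    ∀ s ≤ L, Tendsto (fun k => u k s) atTop (𝓝 (trajectory F a s))
  | 0, _ => ha
  | s + 1, hs => by
    simp only [fun k => hu k s hs, trajectory]
    exact ((hF s).tendsto _).comp (tendsto_trajectory hF hu ha s (by omega))

theorem exists_strictMono_eq_tendsto {X D : Type*} [PseudoMetricSpace X] [ProperSpace X]
    [Finite D] {u : ℕ → X} (hu : Bornology.IsBounded (Set.range u)) (d : ℕ → D) :
    ∃ φ : ℕ → ℕ, StrictMono φ ∧ (∀ k, d (φ k) = d (φ 0)) ∧ ∃ a, Tendsto (u ∘ φ) atTop (𝓝 a) := by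
  obtain ⟨d₀, hd₀⟩ : ∃ d₀, ∃ᶠ k in atTop, d k = d₀ :=
    frequently_exists.1 (Frequently.of_forall fun k => ⟨d k, rfl⟩)
  obtain ⟨ψ, hψ, hψd⟩ := extraction_of_frequently_atTop hd₀
  obtain ⟨a, -, χ, hχ, ha⟩ := tendsto_subseq_of_bounded hu fun k => Set.mem_range_self (ψ k)
  exact ⟨ψ ∘ χ, hψ.comp hχ, fun k => (hψd _).trans (hψd _).symm, a, ha⟩

namespace IsParacontraction

variable {E : Type*} [AddCommGroup E] [Module ℝ E] [TopologicalSpace E] {N : E → ℝ} {P : E → E}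

theorem quasiNonexpansive_s5 (hP : IsParacontraction N P) : QuasiNonexpansive N P := by
  intro x y hy
  by_cases hx : P x = x
  · rw [hx]
  · exact (hP.2 x y hx hy).le

theorem apply_eq_of_le (hP : IsParacontraction N P) {x y : E} (hy : P y = y)
    (h : N (x - y) ≤ N (P x - y)) : P x = x := by
  by_contra hx
  exact (hP.2 x y hx hy).not_ge h

end IsParacontraction

section Averaging

variable {E : Type*} [NormedAddCommGroup E] [NormedSpace ℝ E] {ι : Type*} {s : Finset ι}
  {u : ι → E} {y : E} {r : ℝ}

theorem inv_card_smul_sum_sub (hs : s.Nonempty) :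
    (#s : ℝ)⁻¹ • ∑ j ∈ s, u j - y = ∑ j ∈ s, (#s : ℝ)⁻¹ • (u j - y) := by
  have hcard : (#s : ℝ) ≠ 0 := by exact_mod_cast hs.card_pos.ne'
  rw [← Finset.smul_sum, Finset.sum_sub_distrib, smul_sub, Finset.sum_const,
    ← Nat.cast_smul_eq_nsmul ℝ, smul_smul, inv_mul_cancel₀ hcard, one_smul]

theorem sum_inv_card_eq_one (hs : s.Nonempty) : ∑ _j ∈ s, (#s : ℝ)⁻¹ = 1 := by
  rw [Finset.sum_const, nsmul_eq_mul, mul_inv_cancel₀ (by exact_mod_cast hs.card_pos.ne')]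

theorem dist_inv_card_smul_sum_le (hs : s.Nonempty) (h : ∀ j ∈ s, dist (u j) y ≤ r) :
    dist ((#s : ℝ)⁻¹ • ∑ j ∈ s, u j) y ≤ r := by
  rw [dist_eq_norm, inv_card_smul_sum_sub hs]
  calc ‖∑ j ∈ s, (#s : ℝ)⁻¹ • (u j - y)‖ ≤ ∑ j ∈ s, (#s : ℝ)⁻¹ * r := by
        refine (norm_sum_le _ _).trans (Finset.sum_le_sum fun j hj => ?_)
        rw [norm_smul, Real.norm_of_nonneg (by positivity), ← dist_eq_norm]
        exact mul_le_mul_of_nonneg_left (h j hj) (by positivity)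
    _ = r := by rw [← Finset.sum_mul, sum_inv_card_eq_one hs, one_mul]

theorem dist_inv_card_smul_sum_lt (h : ∀ j ∈ s, dist (u j) y ≤ r) {j : ι} (hj : j ∈ s)
    (hlt : dist (u j) y < r) : dist ((#s : ℝ)⁻¹ • ∑ j ∈ s, u j) y < r := by
  have hs : s.Nonempty := ⟨j, hj⟩
  rw [dist_eq_norm, inv_card_smul_sum_sub hs]
  calc ‖∑ j ∈ s, (#s : ℝ)⁻¹ • (u j - y)‖ < ∑ j ∈ s, (#s : ℝ)⁻¹ * r := by
        refine (norm_sum_le _ _).trans_lt (Finset.sum_lt_sum (fun k hk => ?_) ⟨j, hj, ?_⟩) <;>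
          rw [norm_smul, Real.norm_of_nonneg (by positivity), ← dist_eq_norm]
        · exact mul_le_mul_of_nonneg_left (h k hk) (by positivity)
        · exact mul_lt_mul_of_pos_left hlt (by simpa using hs.card_pos)
    _ = r := by rw [← Finset.sum_mul, sum_inv_card_eq_one hs, one_mul]

theorem eq_of_le_dist_inv_card_smul_sum [StrictConvexSpace ℝ E] (h : ∀ j ∈ s, dist (u j) y ≤ r)
    (hr : r ≤ dist ((#s : ℝ)⁻¹ • ∑ j ∈ s, u j) y) {j k : ι} (hj : j ∈ s) (hk : k ∈ s) :
    u j = u k := by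
  by_contra hjk
  have hs : s.Nonempty := ⟨j, hj⟩
  have hcard : (#s : ℝ)⁻¹ ≠ 0 := inv_ne_zero (by exact_mod_cast hs.card_pos.ne')
  refine hr.not_gt ?_
  rw [dist_eq_norm, inv_card_smul_sum_sub hs]
  exact norm_sum_lt_of_strictConvexSpace (fun _ _ => by positivity) (sum_inv_card_eq_one hs) hj hk
    (fun h' => hjk (sub_left_inj.1 h')) hcard hcard fun i hi => by rw [← dist_eq_norm]; exact h i hi

theorem inv_card_smul_sum_eq (hs : s.Nonempty) {v : E} (h : ∀ j ∈ s, u j = v) :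
    (#s : ℝ)⁻¹ • ∑ j ∈ s, u j = v := by
  rw [Finset.sum_congr rfl h, Finset.sum_const, ← Nat.cast_smul_eq_nsmul ℝ, smul_smul,
    inv_mul_cancel₀ (by exact_mod_cast hs.card_pos.ne'), one_smul]

end Averaging

section ConsensusStep

variable {E : Type*} [NormedAddCommGroup E] [NormedSpace ℝ E] {ι : Type*}
  {M : ι → E → E} {G : ι → Finset ι} {u : ι → E} {y : E} {r : ℝ}

noncomputable def consensusStep (M : ι → E → E) (G : ι → Finset ι) (u : ι → E) : ι → E :=
  fun i => M i ((#(G i) : ℝ)⁻¹ • ∑ j ∈ G i, u j)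

theorem continuous_consensusStep (hM : ∀ i, Continuous (M i)) (G : ι → Finset ι) :
    Continuous (consensusStep M G) :=
  continuous_pi fun i => (hM i).comp (by fun_prop)

variable (hM : ∀ i, IsParacontraction (‖·‖) (M i)) (hy : ∀ i, M i y = y)
include hM hy

theorem dist_consensusStep_le {i : ι} (hi : i ∈ G i) (h : ∀ j ∈ G i, dist (u j) y ≤ r) :
    dist (consensusStep M G u i) y ≤ r := by
  rw [consensusStep, dist_eq_norm]
  refine ((hM i).quasiNonexpansive_s5 _ y (hy i)).trans ?_
  rw [← dist_eq_norm]
  exact dist_inv_card_smul_sum_le ⟨i, hi⟩ h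

theorem dist_consensusStep_lt {i j : ι} (h : ∀ j ∈ G i, dist (u j) y ≤ r) (hj : j ∈ G i)
    (hlt : dist (u j) y < r) : dist (consensusStep M G u i) y < r := by
  rw [consensusStep, dist_eq_norm]
  refine ((hM i).quasiNonexpansive_s5 _ y (hy i)).trans_lt ?_
  rw [← dist_eq_norm]
  exact dist_inv_card_smul_sum_lt h hj hlt

theorem eq_and_apply_eq_of_le_dist_consensusStep [StrictConvexSpace ℝ E] {i : ι} (hi : i ∈ G i)
    (h : ∀ j ∈ G i, dist (u j) y ≤ r) (hr : r ≤ dist (consensusStep M G u i) y) :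
    (∀ j ∈ G i, u j = u i) ∧ M i (u i) = u i := by
  set a := (#(G i) : ℝ)⁻¹ • ∑ j ∈ G i, u j
  have hMa : dist (M i a) y ≤ dist a y := by
    simpa only [dist_eq_norm] using (hM i).quasiNonexpansive_s5 a y (hy i)
  have hagree : ∀ j ∈ G i, u j = u i := fun j hj =>
    eq_of_le_dist_inv_card_smul_sum h (hr.trans hMa) hj hi
  have hle : dist a y ≤ dist (M i a) y := (dist_inv_card_smul_sum_le ⟨i, hi⟩ h).trans hr
  have ha : a = u i := inv_card_smul_sum_eq ⟨i, hi⟩ hagree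
  rw [ha, dist_eq_norm, dist_eq_norm] at hle
  exact ⟨hagree, (hM i).apply_eq_of_le (hy i) hle⟩

variable [Fintype ι]

theorem dist_consensusStep_const_le (hG : ∀ i, i ∈ G i) :
    dist (consensusStep M G u) (fun _ => y) ≤ dist u (fun _ => y) :=
  (dist_pi_le_iff dist_nonneg).2 fun i =>
    dist_consensusStep_le hM hy (hG i) fun j _ => dist_le_pi_dist u (fun _ => y) j

theorem antitone_dist_const {G : ℕ → ι → Finset ι} (hG : ∀ t i, i ∈ G t i) {x : ℕ → ι → E}
    (hx : ∀ t, x (t + 1) = consensusStep M (G t) (x t)) :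
    Antitone fun t => dist (x t) (fun _ => y) :=
  antitone_nat_of_succ_le fun t => hx t ▸ dist_consensusStep_const_le hM hy (hG t)

end ConsensusStep

section Graphs

theorem Relation.ReflTransGen.exists_rel_mem_notMem {α : Type*} {R : α → α → Prop} {S : Set α}
    {a b : α} (h : ReflTransGen R a b) (ha : a ∈ S) (hb : b ∉ S) : ∃ u ∈ S, ∃ v ∉ S, R u v := by
  induction h with
  | refl => exact absurd ha hb
  | @tail c d _ hcd ih =>
    by_cases hc : c ∈ S
    · exact ⟨c, hc, d, hb, hcd⟩
    · exact ih hc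

variable {m : ℕ}

theorem composeChain_add_right (G : ℕ → Fin m → Fin m → Prop) (c a : ℕ) :
    ∀ k, composeChain (fun t => G (t + c)) a k = composeChain G (a + c) k
  | 0 => rfl
  | k + 1 => by simp only [composeChain, composeChain_add_right G c a k, add_right_comm]

theorem propagate_of_composeChain {G : ℕ → Fin m → Fin m → Prop} {Q : ℕ → Fin m → Prop}
    {a k : ℕ} (hQ : ∀ t, a ≤ t → t ≤ a + k → ∀ j i, G t j i → Q t j → Q (t + 1) i) {j i : Fin m}
    (h : composeChain G a k j i) (hj : Q a j) : Q (a + k + 1) i := by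
  induction k generalizing i with
  | zero => exact hQ a le_rfl le_rfl j i h hj
  | succ k ih =>
    obtain ⟨c, hjc, hci⟩ := h
    exact hQ _ (by omega) le_rfl c i hci (ih (fun t h₁ h₂ => hQ t h₁ (by omega)) hjc)

variable {G : ℕ → Fin m → Fin m → Prop} {S : ℕ → Finset (Fin m)} {l : ℕ}
  (hself : ∀ t i, G t i i) (hspread : ∀ t j i, G t j i → j ∈ S t → i ∈ S (t + 1))
include hself hspread

theorem ssubset_of_stronglyConnected (hl : 0 < l) {a : ℕ}
    (hconn : StronglyConnected (composeChain G a (l - 1))) (hne : (S a).Nonempty)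
    (hnu : S a ≠ univ) : S a ⊂ S (a + l) := by
  have hmono : Monotone S := monotone_nat_of_le_succ fun t i hi => hspread t i i (hself t i) hi
  obtain ⟨i, hi⟩ := hne
  obtain ⟨o, ho⟩ : ∃ o, o ∉ S a := by simpa [eq_univ_iff_forall] using hnu
  obtain ⟨u, hu, v, hv, huv⟩ := (hconn i o).exists_rel_mem_notMem (S := {j | j ∈ S a}) hi ho
  refine (ssubset_iff_of_subset (hmono (by omega))).2 ⟨v, ?_, hv⟩
  have := propagate_of_composeChain (Q := fun t j => j ∈ S t)
    (fun t _ _ j i hji hj => hspread t j i hji hj) huv hu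
  rwa [show a + (l - 1) + 1 = a + l by omega] at this

theorem eq_univ_of_stronglyConnected (hl : 0 < l) {a : ℕ}
    (hconn : ∀ b < m, StronglyConnected (composeChain G (a + b * l) (l - 1)))
    (hne : (S a).Nonempty) : S (a + m * l) = univ := by
  have hmono : Monotone S := monotone_nat_of_le_succ fun t i hi => hspread t i i (hself t i) hi
  have hgrow : ∀ b ≤ m, S (a + b * l) = univ ∨ b < #(S (a + b * l)) := by
    intro b
    induction b with
    | zero => simpa using Or.inr hne.card_pos
    | succ b ih =>
      intro hb
      have hle : a + b * l ≤ a + (b + 1) * l := by nlinarith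
      by_cases hu : S (a + b * l) = univ
      · exact Or.inl (eq_univ_of_forall fun i => hmono hle (hu ▸ mem_univ i))
      · have hcard := (ih (by omega)).resolve_left hu
        have hss := ssubset_of_stronglyConnected hself hspread hl (hconn b (by omega))
          (card_pos.1 (by omega)) hu
        rw [show a + b * l + l = a + (b + 1) * l by ring] at hss
        exact Or.inr (by have := card_lt_card hss; omega)
  refine (hgrow m le_rfl).resolve_right fun h => ?_
  have := card_le_univ (S (a + m * l))
  simp only [Fintype.card_fin] at this
  omega

end Graphs

section Rigidity

variable {E : Type*} [NormedAddCommGroup E] [NormedSpace ℝ E] {m l : ℕ} {M : Fin m → E → E}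
  {y : E} {G : ℕ → Fin m → Finset (Fin m)} {w : ℕ → Fin m → E}
  (hM : ∀ i, IsParacontraction (‖·‖) (M i)) (hy : ∀ i, M i y = y) (hself : ∀ t i, i ∈ G t i)
  (hw : ∀ s, w (s + 1) = consensusStep M (G s) (w s))
include hM hy hself hw

theorem dist_le_dist_const_zero (t : ℕ) (i : Fin m) : dist (w t i) y ≤ dist (w 0) fun _ => y :=
  (dist_le_pi_dist _ _ i).trans (antitone_dist_const hM hy hself hw (Nat.zero_le t))

/-- An agent strictly closer to `y` than `r = dist (w 0) (fun _ => y)` during the first block would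
start a set of such agents that grows through each of the blocks `1, …, m` until it contains
everybody at time `l + m * l`. -/
theorem dist_const_zero_le_dist (hl : 0 < l)
    (hconn : ∀ b < m, StronglyConnected (composeChain (fun t j i => j ∈ G t i) (l + b * l) (l - 1)))
    (hr : dist (w 0) (fun _ => y) ≤ dist (w (l + m * l)) fun _ => y) (s : ℕ) (hs : s ≤ l)
    (i : Fin m) : dist (w 0) (fun _ => y) ≤ dist (w s i) y := by
  set r := dist (w 0) fun _ => y
  by_contra! hi
  classical
  set S : ℕ → Finset (Fin m) := fun t => univ.filter fun i => dist (w t i) y < r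
  have hspread : ∀ t j i, j ∈ G t i → j ∈ S t → i ∈ S (t + 1) := fun t j i hji hj => by
    simp only [S, mem_filter, mem_univ, true_and] at hj ⊢
    rw [hw]
    exact dist_consensusStep_lt hM hy (fun j _ => dist_le_dist_const_zero hM hy hself hw t j) hji hj
  have hmono : Monotone S := monotone_nat_of_le_succ fun t i hi => hspread t i i (hself t i) hi
  have hall := eq_univ_of_stronglyConnected (G := fun t j i => j ∈ G t i) hself hspread hl hconn
    ⟨i, hmono hs (by simpa [S] using hi)⟩
  refine hr.not_gt ((dist_pi_lt_iff (dist_nonneg.trans_lt hi)).2 fun j => ?_)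
  have hj : j ∈ S (l + m * l) := hall ▸ mem_univ j
  simpa [S] using hj

theorem exists_apply_eq_and_eq_const_of_dist_le [StrictConvexSpace ℝ E] (hl : 0 < l)
    (hconn : ∀ b ≤ m, StronglyConnected (composeChain (fun t j i => j ∈ G t i) (b * l) (l - 1)))
    (hr : dist (w 0) (fun _ => y) ≤ dist (w (l + m * l)) fun _ => y) :
    ∃ z, (∀ i, M i z = z) ∧ w 0 = fun _ => z := by
  have hfar := dist_const_zero_le_dist hM hy hself hw hl
    (fun b hb => by simpa [add_mul, add_comm] using hconn (b + 1) hb) hr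
  have hrigid : ∀ s < l, ∀ i, (∀ j ∈ G s i, w s j = w s i) ∧ M i (w s i) = w s i :=
    fun s hs i => eq_and_apply_eq_of_le_dist_consensusStep hM hy (hself s i)
      (fun j _ => dist_le_dist_const_zero hM hy hself hw s j) (hw s ▸ hfar (s + 1) hs i)
  have hconst : ∀ s ≤ l, w s = w 0 := by
    intro s
    induction s with
    | zero => exact fun _ => rfl
    | succ s ih =>
      intro hs
      funext i
      obtain ⟨hagree, hfix⟩ := hrigid s hs i
      rw [hw, consensusStep, inv_card_smul_sum_eq ⟨i, hself s i⟩ hagree, hfix, ih (by omega)]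
  have hagree : ∀ j i, composeChain (fun t j i => j ∈ G t i) 0 (l - 1) j i → w 0 j = w 0 i :=
    fun j i h => propagate_of_composeChain (Q := fun _ i => w 0 j = w 0 i)
      (fun t _ ht j' i' hji hj => by
        rw [hj, ← congrFun (hconst t (by omega)) j', ← congrFun (hconst t (by omega)) i']
        exact (hrigid t (by omega) i').1 j' hji) h rfl
  rcases isEmpty_or_nonempty (Fin m) with hm | ⟨⟨i₀⟩⟩
  · exact ⟨y, hy, Subsingleton.elim _ _⟩
  have heq : ∀ i, w 0 i = w 0 i₀ := fun i => by
    have h := hconn 0 (Nat.zero_le m) i i₀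
    rw [zero_mul] at h
    induction h with
    | refl => rfl
    | tail _ hbc ih => exact ih.trans (hagree _ _ hbc)
  refine ⟨w 0 i₀, fun i => ?_, funext heq⟩
  rw [← heq i]
  exact (hrigid 0 hl i).2

end Rigidity

theorem exists_tendsto_const_of_consensusStep {E : Type*} [NormedAddCommGroup E]
    [NormedSpace ℝ E] [StrictConvexSpace ℝ E] [ProperSpace E] {m : ℕ} {M : Fin m → E → E}
    (hM : ∀ i, IsParacontraction (‖·‖) (M i)) (hcommon : ∃ y, ∀ i, M i y = y)
    {G : ℕ → Fin m → Finset (Fin m)} (hself : ∀ t i, i ∈ G t i) {l : ℕ} (hl : 0 < l)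
    (hconn : ∀ k, StronglyConnected (composeChain (fun t j i => j ∈ G t i) (k * l) (l - 1)))
    {x : ℕ → Fin m → E} (hx : ∀ t, x (t + 1) = consensusStep M (G t) (x t)) :
    ∃ z, (∀ i, M i z = z) ∧ Tendsto x atTop (𝓝 fun _ => z) := by
  obtain ⟨y, hy⟩ := hcommon
  have hV := antitone_dist_const hM hy hself hx
  obtain ⟨r, hr⟩ : ∃ r, Tendsto (fun t => dist (x t) fun _ => y) atTop (𝓝 r) :=
    ⟨_, tendsto_atTop_ciInf hV ⟨0, by rintro _ ⟨t, rfl⟩; exact dist_nonneg⟩⟩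
  set L := l + m * l
  have hbdd : Bornology.IsBounded (Set.range fun k => x (k * l)) :=
    Metric.isBounded_closedBall.subset <| Set.range_subset_iff.2 fun k =>
      Metric.mem_closedBall.2 (hV (Nat.zero_le _))
  obtain ⟨φ, hφ, hG, w₀, hw₀⟩ :=
    exists_strictMono_eq_tendsto hbdd fun k (s : Fin L) => G (k * l + s)
  set G' : ℕ → Fin m → Finset (Fin m) := fun s => G (s + φ 0 * l)
  set w := trajectory (fun s => consensusStep M (G' s)) w₀
  have hlim : ∀ s ≤ L, Tendsto (fun k => x (φ k * l + s)) atTop (𝓝 (w s)) :=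
    tendsto_trajectory (fun s => continuous_consensusStep (fun i => (hM i).1) _)
      (fun k s hs => by rw [← add_assoc, hx, congrFun (hG k) ⟨s, hs⟩, add_comm]) hw₀
  have htime : ∀ s, Tendsto (fun k => φ k * l + s) atTop atTop := fun s =>
    tendsto_atTop_mono (fun k => (Nat.le_mul_of_pos_right _ hl).trans (Nat.le_add_right _ s))
      hφ.tendsto_atTop
  have hwr : ∀ s ≤ L, dist (w s) (fun _ => y) = r := fun s hs =>
    tendsto_nhds_unique ((hlim s hs).dist tendsto_const_nhds) (hr.comp (htime s))
  obtain ⟨z, hz, hwz⟩ := exists_apply_eq_and_eq_const_of_dist_le hM hy (fun t i => hself _ i)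
    (fun s => rfl) hl (fun b _ => by
      rw [composeChain_add_right (fun t j i => j ∈ G t i), ← add_mul]
      exact hconn (b + φ 0))
    (by rw [hwr 0 (Nat.zero_le _), hwr L le_rfl])
  refine ⟨z, hz, ?_⟩
  rw [tendsto_iff_dist_tendsto_zero, tendsto_iff_tendsto_subseq_of_antitone
    (antitone_dist_const hM hz hself hx) (htime 0)]
  have h0 := (hlim 0 (Nat.zero_le _)).dist (tendsto_const_nhds (x := fun _ : Fin m => z))
  rwa [hwz, dist_self] at h0

theorem pnorm_eq_norm_toLp {n : ℕ} {p : ℝ} (hp : 0 < p) (v : Fin n → ℝ) :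
    pnorm p v = ‖WithLp.toLp (ENNReal.ofReal p) v‖ := by
  rw [PiLp.norm_eq_sum (by rwa [ENNReal.toReal_ofReal hp.le]), ENNReal.toReal_ofReal hp.le]
  rfl

theorem IsParacontraction.conj_toLp {n : ℕ} {p : ℝ} (hp : 0 < p) {P : (Fin n → ℝ) → Fin n → ℝ}
    (hP : IsParacontraction (pnorm p) P) :
    IsParacontraction (‖·‖) fun v : PiLp (ENNReal.ofReal p) (fun _ : Fin n => ℝ) =>
      WithLp.toLp _ (P (WithLp.ofLp v)) := by
  refine ⟨(PiLp.continuous_toLp _ _).comp (hP.1.comp (PiLp.continuous_ofLp _ _)),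
    fun x y hx hy => ?_⟩
  have hx' : P (WithLp.ofLp x) ≠ WithLp.ofLp x := fun h => hx (congrArg (WithLp.toLp _) h)
  have hy' : P (WithLp.ofLp y) = WithLp.ofLp y := congrArg WithLp.ofLp hy
  simpa only [pnorm_eq_norm_toLp hp, WithLp.toLp_sub, WithLp.toLp_ofLp] using hP.2 _ _ hx' hy'

theorem stmt5_general {n m : ℕ} (p : ℝ) (hp : 1 < p)
    (M : Fin m → (Fin n → ℝ) → (Fin n → ℝ))
    (hpc : ∀ i, IsParacontraction (pnorm p) (M i))
    (hcommon : ∃ y : Fin n → ℝ, ∀ i, M i y = y)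
    (Nbr : ℕ → Fin m → Finset (Fin m))
    (hself : ∀ t i, i ∈ Nbr t i)
    (l ρ₀ : ℕ) (hl : 0 < l)
    (hconn : ∀ k : ℕ, StronglyConnected
      (composeChain (fun t j i => j ∈ Nbr t i) (k * l + ρ₀) (l - 1)))
    (x : ℕ → Fin m → Fin n → ℝ)
    (hx : ∀ t, 1 ≤ t → ∀ i, x (t + 1) i =
      M i (((Nbr t i).card : ℝ)⁻¹ • ∑ j ∈ Nbr t i, x t j)) :
    ∃ z : Fin n → ℝ, (∀ i, Tendsto (fun t => x t i) atTop (𝓝 z)) ∧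
      ∀ i, M i z = z := by
  have : Fact (1 ≤ ENNReal.ofReal p) := ⟨by simpa using hp.le⟩
  have := PiLp.strictConvexSpace_real (ι := Fin n) (by simpa using hp) ENNReal.ofReal_ne_top
  obtain ⟨y, hy⟩ := hcommon
  -- Shifting time by `l + ρ₀` makes the blocks start at multiples of `l` and the recursion hold
  -- from time `0` on.
  obtain ⟨z, hz, hlim⟩ := exists_tendsto_const_of_consensusStep
    (fun i => (hpc i).conj_toLp (by linarith)) ⟨WithLp.toLp _ y, fun i => congrArg _ (hy i)⟩
    (G := fun t => Nbr (t + (l + ρ₀))) (fun t i => hself _ i) hl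
    (fun k => by
      rw [composeChain_add_right (fun t j i => j ∈ Nbr t i)]
      convert hconn (k + 1) using 2
      ring)
    (x := fun t i => WithLp.toLp _ (x (t + (l + ρ₀)) i))
    (fun t => by
      funext i
      dsimp only [consensusStep]
      rw [add_right_comm, hx _ (by omega)]
      simp only [WithLp.ofLp_smul, WithLp.ofLp_sum])
  refine ⟨WithLp.ofLp z, fun i => ?_, fun i => congrArg WithLp.ofLp (hz i)⟩
  exact (tendsto_add_atTop_iff_nat (l + ρ₀)).1
    (((PiLp.continuous_ofLp _ _).tendsto z).comp (tendsto_pi_nhds.1 hlim i))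

theorem stmt5 {n m : ℕ} (hm : 1 < m) (p : ℝ) (hp : 1 < p)
    (M : Fin m → (Fin n → ℝ) → (Fin n → ℝ))
    (hpc : ∀ i, IsParacontraction (pnorm p) (M i))
    (hcommon : ∃ y : Fin n → ℝ, ∀ i, M i y = y)
    (Nbr : ℕ → Fin m → Finset (Fin m))
    (hself : ∀ t i, i ∈ Nbr t i)
    (l ρ₀ : ℕ) (hl : 0 < l) (hρ : 0 < ρ₀)
    (hconn : ∀ k : ℕ, StronglyConnected
      (composeChain (fun t j i => j ∈ Nbr t i) (k * l + ρ₀) (l - 1)))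
    (x : ℕ → Fin m → Fin n → ℝ)
    (hx : ∀ t, 1 ≤ t → ∀ i, x (t + 1) i =
      M i (((Nbr t i).card : ℝ)⁻¹ • ∑ j ∈ Nbr t i, x t j)) :
    ∃ z : Fin n → ℝ, (∀ i, Tendsto (fun t => x t i) atTop (𝓝 z)) ∧
      ∀ i, M i z = z :=
  stmt5_general p hp M hpc hcommon Nbr hself l ρ₀ hl hconn x hx
end

section
/- Suppose S = [s_ij] is an m × m doubly stochastic matrix with positive diagonal entries. Then the linear map x ↦ Sx on ℝ^m is a paracontraction with respect to the 2-norm ‖·‖_2. -/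
open Filter Topology Finset
open scoped ENNReal

lemma var_identity {m : ℕ} (S : Matrix (Fin m) (Fin m) ℝ) (hS : IsDoublyStochastic S)
    (z : Fin m → ℝ) :
    ∑ i, ∑ j, S i j * (z j - S.mulVec z i) ^ 2
      = ∑ j, (z j) ^ 2 - ∑ i, (S.mulVec z i) ^ 2 := by
  have hmu : ∀ i, S.mulVec z i = ∑ j, S i j * z j := by
    intro i; simp [Matrix.mulVec, dotProduct]
  have hrow : ∀ i, ∑ j, S i j = 1 := hS.1.2
  have hcol : ∀ j, ∑ i, S i j = 1 := hS.2
  have step : ∀ i, ∑ j, S i j * (z j - S.mulVec z i) ^ 2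
      = ∑ j, S i j * (z j) ^ 2 - (S.mulVec z i) ^ 2 := by
    intro i
    calc ∑ j, S i j * (z j - S.mulVec z i) ^ 2
        = ∑ j, (S i j * (z j) ^ 2 - 2 * (S.mulVec z i) * (S i j * z j)
            + (S.mulVec z i) ^ 2 * S i j) := by
          refine Finset.sum_congr rfl fun j _ => by ring
      _ = ∑ j, S i j * (z j) ^ 2 - 2 * (S.mulVec z i) * ∑ j, S i j * z j
            + (S.mulVec z i) ^ 2 * ∑ j, S i j := by
          simp [Finset.sum_add_distrib, Finset.sum_sub_distrib, Finset.mul_sum]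
      _ = ∑ j, S i j * (z j) ^ 2 - (S.mulVec z i) ^ 2 := by
          rw [← hmu i, hrow i]; ring
  calc ∑ i, ∑ j, S i j * (z j - S.mulVec z i) ^ 2
      = ∑ i, (∑ j, S i j * (z j) ^ 2 - (S.mulVec z i) ^ 2) :=
        Finset.sum_congr rfl fun i _ => step i
    _ = (∑ i, ∑ j, S i j * (z j) ^ 2) - ∑ i, (S.mulVec z i) ^ 2 := by
        rw [Finset.sum_sub_distrib]
    _ = (∑ j, (∑ i, S i j) * (z j) ^ 2) - ∑ i, (S.mulVec z i) ^ 2 := by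
        rw [Finset.sum_comm]
        simp [Finset.sum_mul]
    _ = ∑ j, (z j) ^ 2 - ∑ i, (S.mulVec z i) ^ 2 := by
        simp [hcol]

lemma pnorm_two_eq {m : ℕ} (w : Fin m → ℝ) :
    pnorm 2 w = (∑ i, (w i) ^ 2) ^ ((1:ℝ)/2) := by
  unfold pnorm
  congr 1
  refine Finset.sum_congr rfl fun i _ => ?_
  rw [show ((2:ℝ)) = ((2:ℕ):ℝ) by norm_num, Real.rpow_natCast, sq_abs]

theorem stmt7 {m : ℕ} (S : Matrix (Fin m) (Fin m) ℝ)
    (hS : IsDoublyStochastic S) (hdiag : ∀ i, 0 < S i i) :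
    IsParacontraction (pnorm 2) S.mulVec := by
  constructor
  · exact (Matrix.mulVecLin S).continuous_of_finiteDimensional
  · intro x y hx hy
    set z := x - y with hzdef
    have hmv : S.mulVec z = S.mulVec x - y := by
      rw [hzdef, Matrix.mulVec_sub, hy]
    have hSz : S.mulVec z ≠ z := by
      rw [hmv, hzdef]
      intro h
      exact hx (sub_left_inj.mp h)
    obtain ⟨i0, hi0⟩ : ∃ i, S.mulVec z i ≠ z i := by
      by_contra h; push_neg at h; exact hSz (funext h)
    have hnn : ∀ i j, 0 ≤ S i j * (z j - S.mulVec z i) ^ 2 :=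
      fun i j => mul_nonneg (hS.1.1 i j) (sq_nonneg _)
    have hpos : 0 < ∑ i, ∑ j, S i j * (z j - S.mulVec z i) ^ 2 := by
      refine Finset.sum_pos' (fun i _ => Finset.sum_nonneg fun j _ => hnn i j) ?_
      refine ⟨i0, Finset.mem_univ _, ?_⟩
      refine Finset.sum_pos' (fun j _ => hnn i0 j) ⟨i0, Finset.mem_univ _, ?_⟩
      have hne : z i0 - S.mulVec z i0 ≠ 0 := sub_ne_zero.mpr (Ne.symm hi0)
      exact mul_pos (hdiag i0) (by positivity)
    rw [var_identity S hS z] at hpos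
    have hlt : ∑ i, (S.mulVec z i) ^ 2 < ∑ j, (z j) ^ 2 := by linarith
    have key : pnorm 2 (S.mulVec z) < pnorm 2 z := by
      rw [pnorm_two_eq, pnorm_two_eq]
      exact Real.rpow_lt_rpow (Finset.sum_nonneg fun i _ => sq_nonneg _) hlt (by norm_num)
    rwa [hmv, hzdef] at key
end

section
/- Suppose S = [s_ij] is an m × m doubly stochastic matrix with positive diagonal entries. Then the map S ⊗ I on (ℝ^n)^m, sending x = (x_1, …, x_m) to the vector whose i-th block is ∑_{j=1}^m s_ij x_j, is a paracontraction with respect to the mixed vector norm ‖·‖_{2,2}. -/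
open Filter Topology Finset
open scoped ENNReal

def Qsum {m n : ℕ} (x : Fin m → Fin n → ℝ) : ℝ := ∑ i, ∑ t, (x i t) ^ 2

lemma pnorm2_eq {n : ℕ} (x : Fin n → ℝ) : pnorm 2 x = (∑ t, (x t)^2) ^ ((1:ℝ)/2) := by
  unfold pnorm
  congr 1
  refine Finset.sum_congr rfl fun t _ => ?_
  rw [show ((2:ℝ)) = ((2:ℕ):ℝ) by norm_num, Real.rpow_natCast, sq_abs]

lemma Qsum_nonneg {m n : ℕ} (x : Fin m → Fin n → ℝ) : 0 ≤ Qsum x := by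
  refine Finset.sum_nonneg fun i _ => Finset.sum_nonneg fun t _ => sq_nonneg _

lemma mixed22_eq {m n : ℕ} (x : Fin m → Fin n → ℝ) :
    mixed22 x = (Qsum x) ^ ((1:ℝ)/2) := by
  unfold mixed22 Qsum
  rw [pnorm2_eq]
  congr 1
  refine Finset.sum_congr rfl fun i _ => ?_
  rw [pnorm2_eq, ← Real.rpow_natCast (((∑ t, x i t ^ 2) ^ ((1:ℝ)/2))) 2,
    ← Real.rpow_mul (Finset.sum_nonneg fun t _ => sq_nonneg _)]
  norm_num

lemma wsum_sq_identity {m : ℕ} (w a : Fin m → ℝ) (hw : ∑ j, w j = 1) :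
    (∑ j, w j * a j) ^ 2 =
      ∑ j, w j * a j ^ 2 - (1/2) * ∑ j, ∑ k, w j * w k * (a j - a k) ^ 2 := by
  have h1 : ∑ j, ∑ k, w j * w k * (a j - a k) ^ 2
      = ∑ j, ∑ k, ((w j * a j ^ 2) * w k + w j * (w k * a k ^ 2)
          - 2 * ((w j * a j) * (w k * a k))) := by
    refine Finset.sum_congr rfl fun j _ => Finset.sum_congr rfl fun k _ => by ring
  rw [h1]
  simp only [Finset.sum_add_distrib, Finset.sum_sub_distrib, ← Finset.mul_sum]
  simp only [← Finset.sum_mul, hw]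
  ring

lemma kron_apply {m n : ℕ} (S : Matrix (Fin m) (Fin m) ℝ) (z : Fin m → Fin n → ℝ)
    (i : Fin m) (t : Fin n) : kron S z i t = ∑ j, S i j * z j t := by
  simp [kron]

lemma Qsum_kron_lt {m n : ℕ} (S : Matrix (Fin m) (Fin m) ℝ)
    (hS : IsDoublyStochastic S) (hdiag : ∀ i, 0 < S i i)
    (z : Fin m → Fin n → ℝ) (hz : kron S z ≠ z) :
    Qsum (kron S z) < Qsum z := by
  obtain ⟨⟨hnn, hrow⟩, hcol⟩ := hS
  set R : ℝ := ∑ i, ∑ t, ∑ j, ∑ k, S i j * S i k * (z j t - z k t) ^ 2 with hR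
  have hmain : Qsum (kron S z) = Qsum z - (1/2) * R := by
    have h1 : Qsum (kron S z)
        = ∑ i, ∑ t, (∑ j, S i j * (z j t) ^ 2
            - (1/2) * ∑ j, ∑ k, S i j * S i k * (z j t - z k t) ^ 2) := by
      refine Finset.sum_congr rfl fun i _ => Finset.sum_congr rfl fun t _ => ?_
      rw [kron_apply, wsum_sq_identity (fun j => S i j) (fun j => z j t) (hrow i)]
    rw [h1]
    have h2 : ∑ i, ∑ t, ∑ j, S i j * (z j t) ^ 2 = Qsum z := by
      have e1 : (∑ i, ∑ t, ∑ j, S i j * (z j t) ^ 2)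
          = ∑ i, ∑ j, ∑ t, S i j * (z j t) ^ 2 :=
        Finset.sum_congr rfl fun i _ => Finset.sum_comm
      have e2 : (∑ i, ∑ j, ∑ t, S i j * (z j t) ^ 2)
          = ∑ j, ∑ i, ∑ t, S i j * (z j t) ^ 2 := Finset.sum_comm
      have e3 : (∑ j, ∑ i, ∑ t, S i j * (z j t) ^ 2)
          = ∑ j, ∑ t, ∑ i, S i j * (z j t) ^ 2 :=
        Finset.sum_congr rfl fun j _ => Finset.sum_comm
      rw [e1, e2, e3]
      refine Finset.sum_congr rfl fun j _ => Finset.sum_congr rfl fun t _ => ?_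
      rw [← Finset.sum_mul, hcol j, one_mul]
    simp only [Finset.sum_sub_distrib, ← Finset.mul_sum]
    rw [h2, hR]
  have hRpos : 0 < R := by
    obtain ⟨i₀, hi₀⟩ : ∃ i, kron S z i ≠ z i := by
      by_contra h; push_neg at h; exact hz (funext h)
    obtain ⟨j₀, hSj, hzj⟩ : ∃ j, S i₀ j ≠ 0 ∧ z j ≠ z i₀ := by
      by_contra h; push_neg at h
      apply hi₀
      have : ∀ j ∈ Finset.univ, S i₀ j • z j = S i₀ j • z i₀ := by
        intro j _
        rcases eq_or_ne (S i₀ j) 0 with h0 | h0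
        · simp [h0]
        · rw [h j h0]
      calc kron S z i₀ = ∑ j, S i₀ j • z i₀ := Finset.sum_congr rfl this
        _ = (∑ j, S i₀ j) • z i₀ := by rw [Finset.sum_smul]
        _ = z i₀ := by rw [hrow i₀, one_smul]
    obtain ⟨t₀, ht₀⟩ : ∃ t, z j₀ t ≠ z i₀ t := by
      by_contra h; push_neg at h; exact hzj (funext h)
    have hsq : 0 < (z j₀ t₀ - z i₀ t₀) ^ 2 :=
      (sq_nonneg _).lt_of_ne (Ne.symm (pow_ne_zero 2 (sub_ne_zero.mpr ht₀)))
    have hterm : 0 < S i₀ j₀ * S i₀ i₀ * (z j₀ t₀ - z i₀ t₀) ^ 2 :=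
      mul_pos (mul_pos ((hnn i₀ j₀).lt_of_ne (Ne.symm hSj)) (hdiag i₀)) hsq
    have tnn : ∀ (i j k : Fin m) (t : Fin n), 0 ≤ S i j * S i k * (z j t - z k t) ^ 2 :=
      fun i j k t => mul_nonneg (mul_nonneg (hnn i j) (hnn i k)) (sq_nonneg _)
    have s1 : S i₀ j₀ * S i₀ i₀ * (z j₀ t₀ - z i₀ t₀) ^ 2
        ≤ ∑ k, S i₀ j₀ * S i₀ k * (z j₀ t₀ - z k t₀) ^ 2 :=
      Finset.single_le_sum (fun k _ => tnn i₀ j₀ k t₀) (Finset.mem_univ i₀)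
    have s2 : (∑ k, S i₀ j₀ * S i₀ k * (z j₀ t₀ - z k t₀) ^ 2)
        ≤ ∑ j, ∑ k, S i₀ j * S i₀ k * (z j t₀ - z k t₀) ^ 2 :=
      Finset.single_le_sum
        (fun j _ => Finset.sum_nonneg fun k _ => tnn i₀ j k t₀) (Finset.mem_univ j₀)
    have s3 : (∑ j, ∑ k, S i₀ j * S i₀ k * (z j t₀ - z k t₀) ^ 2)
        ≤ ∑ t, ∑ j, ∑ k, S i₀ j * S i₀ k * (z j t - z k t) ^ 2 :=
      Finset.single_le_sum
        (fun t _ => Finset.sum_nonneg fun j _ => Finset.sum_nonneg fun k _ => tnn i₀ j k t)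
        (Finset.mem_univ t₀)
    have s4 : (∑ t, ∑ j, ∑ k, S i₀ j * S i₀ k * (z j t - z k t) ^ 2) ≤ R :=
      Finset.single_le_sum
        (fun i _ => Finset.sum_nonneg fun t _ => Finset.sum_nonneg fun j _ =>
          Finset.sum_nonneg fun k _ => tnn i j k t)
        (Finset.mem_univ i₀)
    linarith
  linarith [hmain, hRpos]

lemma kron_sub {m n : ℕ} (S : Matrix (Fin m) (Fin m) ℝ) (x y : Fin m → Fin n → ℝ) :
    kron S (x - y) = kron S x - kron S y := by
  funext i
  simp [kron, smul_sub, Finset.sum_sub_distrib]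

lemma kron_continuous {m n : ℕ} (S : Matrix (Fin m) (Fin m) ℝ) :
    Continuous (kron (n := n) S) := by
  refine continuous_pi fun i => ?_
  exact continuous_finset_sum _ fun j _ => (continuous_apply j).const_smul (S i j)

theorem stmt8 {n m : ℕ} (S : Matrix (Fin m) (Fin m) ℝ)
    (hS : IsDoublyStochastic S) (hdiag : ∀ i, 0 < S i i) :
    IsParacontraction mixed22 (kron (n := n) S) := by
  refine ⟨kron_continuous S, fun x y hx hy => ?_⟩
  have hz : kron S (x - y) ≠ x - y := by
    rw [kron_sub, hy]
    intro h
    exact hx (sub_left_injective h)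
  have hQ := Qsum_kron_lt S hS hdiag (x - y) hz
  rw [mixed22_eq, mixed22_eq, show kron S x - y = kron S (x - y) by rw [kron_sub, hy]]
  exact Real.rpow_lt_rpow (Qsum_nonneg _) hQ (by norm_num)
end

section
/- Suppose S = [s_ij] is an m × m stochastic matrix all of whose entries are strictly positive. Then for any real p with 1 < p < ∞, the map S ⊗ I on (ℝ^n)^m, sending x = (x_1, …, x_m) to the vector whose i-th block is ∑_{j=1}^m s_ij x_j, is a paracontraction with respect to the mixed vector norm ‖·‖_{p,∞}. -/
open Filter Topology Finset
open scoped ENNReal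

lemma aux_abs_sum_le {m : ℕ} (s a : Fin m → ℝ) (hs : ∀ j, 0 ≤ s j) :
    |∑ j, s j * a j| ≤ ∑ j, s j * |a j| := by
  refine (Finset.abs_sum_le_sum_abs _ _).trans (le_of_eq ?_)
  exact Finset.sum_congr rfl fun j _ => by rw [abs_mul, abs_of_nonneg (hs j)]

lemma aux_scalar_strict {m : ℕ} {p : ℝ} (hp : 1 < p) (s a : Fin m → ℝ)
    (hs : ∀ j, 0 < s j) (hsum : ∑ j, s j = 1)
    {j1 j2 : Fin m} (hne : a j1 ≠ a j2) :
    |∑ j, s j * a j| ^ p < ∑ j, s j * |a j| ^ p := by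
  have hp0 : (0:ℝ) < p := lt_trans zero_lt_one hp
  have hjensen : (∑ j, s j * |a j|) ^ p ≤ ∑ j, s j * |a j| ^ p :=
    Real.rpow_arith_mean_le_arith_mean_rpow Finset.univ s (fun j => |a j|)
      (fun j _ => (hs j).le) hsum (fun j _ => abs_nonneg _) hp.le
  by_cases habs : |a j1| = |a j2|
  · have h1 : a j1 = -a j2 := by
      rcases abs_eq_abs.mp habs with h | h
      · exact absurd h hne
      · exact h
    have h2 : a j2 ≠ 0 := fun h => hne (by rw [h1, h, neg_zero])
    obtain ⟨jp, jn, hjp, hjn⟩ : ∃ jp jn : Fin m, 0 < a jp ∧ a jn < 0 := by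
      rcases lt_or_gt_of_ne h2 with h | h
      · exact ⟨j1, j2, by rw [h1]; linarith, h⟩
      · exact ⟨j2, j1, h, by rw [h1]; linarith⟩
    have hupper : ∑ j, s j * a j < ∑ j, s j * |a j| :=
      Finset.sum_lt_sum (fun j _ => mul_le_mul_of_nonneg_left (le_abs_self _) (hs j).le)
        ⟨jn, Finset.mem_univ _, by
          have h3 : a jn < |a jn| := by rw [abs_of_neg hjn]; linarith
          exact mul_lt_mul_of_pos_left h3 (hs jn)⟩
    have hlower : -(∑ j, s j * |a j|) < ∑ j, s j * a j := by
      rw [neg_lt]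
      have heq : -(∑ j, s j * a j) = ∑ j, s j * (-a j) := by
        rw [← Finset.sum_neg_distrib]
        exact Finset.sum_congr rfl fun j _ => (mul_neg _ _).symm
      rw [heq]
      exact Finset.sum_lt_sum (fun j _ => mul_le_mul_of_nonneg_left (neg_le_abs _) (hs j).le)
        ⟨jp, Finset.mem_univ _, by
          have h3 : -a jp < |a jp| := by rw [abs_of_pos hjp]; linarith
          exact mul_lt_mul_of_pos_left h3 (hs jp)⟩
    have hlt : |∑ j, s j * a j| < ∑ j, s j * |a j| := abs_lt.mpr ⟨hlower, hupper⟩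
    exact lt_of_lt_of_le (Real.rpow_lt_rpow (abs_nonneg _) hlt hp0) hjensen
  · have hstrict : (∑ j, s j * |a j|) ^ p < ∑ j, s j * |a j| ^ p := by
      have h := (strictConvexOn_rpow hp).map_sum_lt (t := Finset.univ) (w := s)
        (p := fun j => |a j|) (fun j _ => hs j) hsum
        (fun j _ => Set.mem_Ici.mpr (abs_nonneg _))
        ⟨j1, Finset.mem_univ _, j2, Finset.mem_univ _, habs⟩
      simpa [smul_eq_mul] using h
    refine lt_of_le_of_lt ?_ hstrict
    exact Real.rpow_le_rpow (abs_nonneg _) (aux_abs_sum_le s a fun j => (hs j).le) hp0.le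

theorem stmt12 {n m : ℕ} (S : Matrix (Fin m) (Fin m) ℝ)
    (hS : IsStochastic S) (hpos : ∀ i j, 0 < S i j)
    (p : ℝ) (hp : 1 < p) :
    IsParacontraction (mixedPInf p) (kron (n := n) S) := by
  constructor
  · exact continuous_pi fun i => continuous_finset_sum _ fun j _ =>
      (continuous_apply j).const_smul (S i j)
  · intro x y hxne hy
    rcases Nat.eq_zero_or_pos m with hm0 | hm
    · subst hm0; exact absurd (funext fun i => i.elim0) hxne
    haveI : Nonempty (Fin m) := ⟨⟨0, hm⟩⟩
    have hp0 : (0:ℝ) < p := lt_trans zero_lt_one hp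
    have hpne : p ≠ 0 := ne_of_gt hp0
    obtain ⟨hSnn, hSsum⟩ := hS
    set v : Fin m → Fin n → ℝ := fun j => x j - y j with hv
    have hyi : ∀ i, y i = ∑ j, S i j • y j := fun i => (congrFun hy i).symm
    have hPv : ∀ i, kron S x i - y i = ∑ j, S i j • v j := by
      intro i
      show (∑ j, S i j • x j) - y i = ∑ j, S i j • v j
      rw [hyi i, ← Finset.sum_sub_distrib]
      exact Finset.sum_congr rfl fun j _ => (smul_sub _ _ _).symm
    have hne : ∃ j1 j2 : Fin m, v j1 ≠ v j2 := by
      by_contra hcon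
      push_neg at hcon
      apply hxne
      funext i
      have hxj : ∀ j, x j = y j + v ⟨0, hm⟩ := by
        intro j
        have h : x j - y j = v ⟨0, hm⟩ := hcon j _
        exact sub_eq_iff_eq_add'.mp h
      show (∑ j, S i j • x j) = x i
      calc ∑ j, S i j • x j = ∑ j, (S i j • y j + S i j • v ⟨0, hm⟩) := by
            refine Finset.sum_congr rfl fun j _ => ?_
            rw [hxj j, smul_add]
        _ = (∑ j, S i j • y j) + (∑ j, S i j) • v ⟨0, hm⟩ := by
            rw [Finset.sum_add_distrib, Finset.sum_smul]
        _ = y i + v ⟨0, hm⟩ := by rw [← hyi i, hSsum i, one_smul]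
        _ = x i := (hxj i).symm
    obtain ⟨j1, j2, hj12⟩ := hne
    obtain ⟨k0, hk0⟩ : ∃ k, v j1 k ≠ v j2 k := by
      by_contra hcon; push_neg at hcon; exact hj12 (funext hcon)
    set M : ℝ := ⨆ j, pnorm p (v j) with hMdef
    have hbdd : BddAbove (Set.range fun j => pnorm p (v j)) :=
      Set.Finite.bddAbove (Set.finite_range _)
    have hdM : ∀ j, pnorm p (v j) ≤ M := fun j => le_ciSup hbdd j
    have hsum_nonneg : ∀ j, (0:ℝ) ≤ ∑ k, |v j k| ^ p := fun j =>
      Finset.sum_nonneg fun k _ => Real.rpow_nonneg (abs_nonneg _) _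
    have hM0 : 0 ≤ M := le_trans (Real.rpow_nonneg (hsum_nonneg j1) _) (hdM j1)
    have hvjp : ∀ j, ∑ k, |v j k| ^ p ≤ M ^ p := by
      intro j
      have h1 : (∑ k, |v j k| ^ p) ^ (1/p) ≤ M := hdM j
      calc ∑ k, |v j k| ^ p = ((∑ k, |v j k| ^ p) ^ (1/p)) ^ p := by
            rw [← Real.rpow_mul (hsum_nonneg j), one_div_mul_cancel hpne, Real.rpow_one]
        _ ≤ M ^ p := Real.rpow_le_rpow (Real.rpow_nonneg (hsum_nonneg j) _) h1 hp0.le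
    have key : ∀ i, pnorm p (∑ j, S i j • v j) < M := by
      intro i
      have huk : ∀ k, (∑ j, S i j • v j) k = ∑ j, S i j * v j k := by
        intro k; simp [Finset.sum_apply]
      have hknon : ∀ k, |(∑ j, S i j • v j) k| ^ p ≤ ∑ j, S i j * |v j k| ^ p := by
        intro k
        rw [huk k]
        calc |∑ j, S i j * v j k| ^ p ≤ (∑ j, S i j * |v j k|) ^ p :=
              Real.rpow_le_rpow (abs_nonneg _)
                (aux_abs_sum_le _ _ fun j => (hpos i j).le) hp0.le
          _ ≤ ∑ j, S i j * |v j k| ^ p :=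
              Real.rpow_arith_mean_le_arith_mean_rpow Finset.univ _ _
                (fun j _ => (hpos i j).le) (hSsum i) (fun j _ => abs_nonneg _) hp.le
      have hkstrict : |(∑ j, S i j • v j) k0| ^ p < ∑ j, S i j * |v j k0| ^ p := by
        rw [huk k0]
        exact aux_scalar_strict hp _ _ (hpos i) (hSsum i) hk0
      have hsumlt : ∑ k, |(∑ j, S i j • v j) k| ^ p < M ^ p := by
        calc ∑ k, |(∑ j, S i j • v j) k| ^ p < ∑ k, ∑ j, S i j * |v j k| ^ p :=
              Finset.sum_lt_sum (fun k _ => hknon k) ⟨k0, Finset.mem_univ _, hkstrict⟩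
          _ = ∑ j, S i j * ∑ k, |v j k| ^ p := by
              rw [Finset.sum_comm]
              exact Finset.sum_congr rfl fun j _ => (Finset.mul_sum _ _ _).symm
          _ ≤ ∑ j, S i j * M ^ p :=
              Finset.sum_le_sum fun j _ =>
                mul_le_mul_of_nonneg_left (hvjp j) (hpos i j).le
          _ = M ^ p := by rw [← Finset.sum_mul, hSsum i, one_mul]
      have h2 := Real.rpow_lt_rpow
        (Finset.sum_nonneg fun k _ => Real.rpow_nonneg (abs_nonneg _) _) hsumlt
        (by positivity : (0:ℝ) < 1/p)
      calc pnorm p (∑ j, S i j • v j)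
          = (∑ k, |(∑ j, S i j • v j) k| ^ p) ^ (1/p) := rfl
        _ < (M ^ p) ^ (1/p) := h2
        _ = M := by rw [← Real.rpow_mul hM0, mul_one_div_cancel hpne, Real.rpow_one]
    obtain ⟨i0, hi0⟩ := Finite.exists_max fun i => pnorm p (kron S x i - y i)
    have hMeq : mixedPInf p (x - y) = M := rfl
    calc mixedPInf p (kron S x - y) ≤ pnorm p (kron S x i0 - y i0) := ciSup_le hi0
      _ = pnorm p (∑ j, S i0 j • v j) := by rw [hPv i0]
      _ < M := key i0
      _ = mixedPInf p (x - y) := hMeq.symm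
end

section
/- Let n ≥ 1, let 1 ≤ p ≤ ∞, and suppose S = [s_ij] is an m × m stochastic matrix such that the fixed-point set of the map S ⊗ I on (ℝ^n)^m equals the consensus set C. If S ⊗ I is a paracontraction with respect to the mixed vector norm ‖·‖_{p,∞}, then every entry of S is strictly positive. -/
open Filter Topology Finset
open scoped ENNReal

theorem stmt13 {n m : ℕ} (hn : 1 ≤ n) (p : ℝ≥0∞) (hp : 1 ≤ p)
    (S : Matrix (Fin m) (Fin m) ℝ) (hS : IsStochastic S)
    (hfix : {x : Fin m → Fin n → ℝ | kron S x = x} = consensusSet m n)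
    (hpc : IsParacontraction (mixedEInf p) (kron (n := n) S)) :
    ∀ i j, 0 < S i j := by
  intro i j
  rcases le_or_gt m 1 with hm | hm
  · haveI : Subsingleton (Fin m) := Fin.subsingleton_iff_le_one.mpr hm
    have hj : j = i := Subsingleton.elim _ _
    have h1 := hS.2 i
    rw [Fintype.sum_subsingleton _ i] at h1
    rw [hj, h1]; exact one_pos
  · rcases (hS.1 i j).lt_or_eq with h | h
    · exact h
    exfalso
    have hzero : S i j = 0 := h.symm
    have hn0 : 0 < n := hn
    set i0 : Fin n := ⟨0, hn0⟩ with hi0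
    set v : Fin n → ℝ := fun a => if a = i0 then (1:ℝ) else 0 with hv
    set x : Fin m → Fin n → ℝ := fun k => if k = j then (0 : Fin n → ℝ) else v with hxdef
    have hpne : p ≠ 0 := (lt_of_lt_of_le zero_lt_one hp).ne'
    haveI : Nonempty (Fin n) := ⟨i0⟩
    have hpv : pnormE p v = 1 := by
      unfold pnormE
      split_ifs with htop
      · refine le_antisymm (ciSup_le fun a => ?_) ?_
        · by_cases ha : a = i0 <;> simp [hv, ha]
        · have : (1:ℝ) = |v i0| := by simp [hv]
          rw [this]
          exact le_ciSup (f := fun a => |v a|) (Set.finite_range _).bddAbove i0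
      · have ht : 0 < p.toReal := ENNReal.toReal_pos hpne htop
        have hsum : ∑ a, |v a| ^ p.toReal = 1 := by
          have : ∀ a : Fin n, |v a| ^ p.toReal = if a = i0 then (1:ℝ) else 0 := by
            intro a
            by_cases ha : a = i0 <;>
              simp [hv, ha, Real.one_rpow, Real.zero_rpow ht.ne']
          rw [Finset.sum_congr rfl fun a _ => this a]
          simp
        rw [hsum, Real.one_rpow]
    have hp0 : pnormE p (0 : Fin n → ℝ) = 0 := by
      unfold pnormE
      split_ifs with htop
      · simp
      · have ht : 0 < p.toReal := ENNReal.toReal_pos hpne htop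
        have h1t : (1 / p.toReal) ≠ 0 := by positivity
        simp only [Pi.zero_apply, abs_zero, Real.zero_rpow ht.ne',
          Finset.sum_const_zero]
        exact Real.zero_rpow (by positivity)
    have hkx : kron S x i = v := by
      have : ∀ k : Fin m, S i k • x k = S i k • v - (if k = j then S i k • v else 0) := by
        intro k
        by_cases hk : k = j
        · subst hk; simp [hxdef, hzero]
        · simp [hxdef, hk]
      calc kron S x i = ∑ k, S i k • x k := rfl
        _ = ∑ k, (S i k • v - (if k = j then S i k • v else 0)) :=
            Finset.sum_congr rfl fun k _ => this k
        _ = (∑ k, S i k • v) - (∑ k, if k = j then S i k • v else 0) := by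
            rw [Finset.sum_sub_distrib]
        _ = (∑ k, S i k) • v - S i j • v := by
            rw [Finset.sum_smul, Finset.sum_ite_eq' Finset.univ j (fun k => S i k • v)]
            simp
        _ = v := by rw [hS.2 i, hzero]; simp
    have hfx : kron S x ≠ x := by
      intro heq
      have hcons : x ∈ consensusSet m n := by rw [← hfix]; exact heq
      obtain ⟨k₀, hk₀⟩ :=
        Fintype.exists_ne_of_one_lt_card (by simpa using hm) j
      have hxx := hcons k₀ j
      simp only [hxdef, if_pos rfl, if_neg hk₀] at hxx
      have := congrFun hxx i0
      simp [hv] at this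
    have h0fix : kron S (0 : Fin m → Fin n → ℝ) = 0 := by
      funext k; simp [kron]
    have hlt := hpc.2 x 0 hfx h0fix
    rw [sub_zero, sub_zero] at hlt
    haveI : Nonempty (Fin m) := ⟨j⟩
    have hub : mixedEInf p x ≤ 1 := by
      refine ciSup_le fun k => ?_
      by_cases hk : k = j
      · simp [hxdef, hk, hp0]
      · simp [hxdef, hk, hpv]
    have hlb : (1:ℝ) ≤ mixedEInf p (kron S x) := by
      calc (1:ℝ) = pnormE p (kron S x i) := by rw [hkx, hpv]
        _ ≤ mixedEInf p (kron S x) :=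
            le_ciSup (f := fun k => pnormE p (kron S x k))
              (Set.finite_range _).bddAbove i
    linarith
end

section
/- Let M_1, …, M_m : ℝ^n → ℝ^n be paracontractions with respect to a norm ‖·‖ on ℝ^n, let y* be a common fixed point of M_1, …, M_m, and let S(1), …, S(q) be m × m stochastic matrices with entries s_ij(t). For arbitrary v_1(0), …, v_m(0) ∈ ℝ^n define v_i(t+1) = ∑_{j=1}^m s_ij(t+1) M_j(v_j(t)) for 0 ≤ t < q, and define Φ(t,τ) = S(t)S(t−1)⋯S(τ+1) for 0 ≤ τ < t ≤ q with Φ(t,t) = I, writing φ_ij(t,τ) for its entries. Then for every i ∈ {1,…,m} and every 0 ≤ τ ≤ t ≤ q, ‖v_i(t) − y*‖ ≤ ∑_{j=1}^m φ_ij(t,τ) ‖v_j(τ) − y*‖. -/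
open Filter Topology Finset
open scoped ENNReal

lemma normOn_nonneg {E : Type*} [AddCommGroup E] [Module ℝ E] {N : E → ℝ}
    (hN : IsNormOn N) (x : E) : 0 ≤ N x := by
  obtain ⟨h0, hs, ha⟩ := hN
  have h1 : N (x + (-1 : ℝ) • x) ≤ N x + N ((-1 : ℝ) • x) := ha x _
  have h2 : x + (-1 : ℝ) • x = 0 := by simp
  rw [h2, (h0 0).mpr rfl, hs] at h1
  simp at h1
  linarith

lemma normOn_sum {E : Type*} [AddCommGroup E] [Module ℝ E] {N : E → ℝ}
    (hN : IsNormOn N) {ι : Type*} (s : Finset ι) (f : ι → E) :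
    N (∑ j ∈ s, f j) ≤ ∑ j ∈ s, N (f j) := by
  classical
  induction s using Finset.cons_induction with
  | empty => simp [(hN.1 0).mpr rfl]
  | cons a s ha ih =>
    rw [Finset.sum_cons, Finset.sum_cons]
    exact (hN.2.2 _ _).trans (by linarith)

lemma Phi_self {m : ℕ} (S : ℕ → Matrix (Fin m) (Fin m) ℝ) (τ : ℕ) :
    Phi S τ τ = 1 := by simp [Phi]

lemma Phi_succ {m : ℕ} (S : ℕ → Matrix (Fin m) (Fin m) ℝ) {τ t : ℕ} (h : τ ≤ t) :
    Phi S τ (t + 1) = S (t + 1) * Phi S τ t := by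
  have : t + 1 - τ = (t - τ) + 1 := by omega
  rw [Phi, this, List.range_succ, List.foldl_append]
  simp only [List.foldl_cons, List.foldl_nil, Phi]
  have e : τ + (t - τ) + 1 = t + 1 := by omega
  rw [e]

theorem stmt16 {n m : ℕ} (N : (Fin n → ℝ) → ℝ) (hN : IsNormOn N)
    (M : Fin m → (Fin n → ℝ) → (Fin n → ℝ))
    (hpc : ∀ i, IsParacontraction N (M i))
    (ystar : Fin n → ℝ) (hy : ∀ i, M i ystar = ystar)
    (q : ℕ) (S : ℕ → Matrix (Fin m) (Fin m) ℝ)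
    (hS : ∀ t, 1 ≤ t → t ≤ q → IsStochastic (S t))
    (v : ℕ → Fin m → Fin n → ℝ)
    (hv : ∀ t, t < q → ∀ i, v (t + 1) i = ∑ j, S (t + 1) i j • M j (v t j)) :
    ∀ (i : Fin m) (τ t : ℕ), τ ≤ t → t ≤ q →
      N (v t i - ystar) ≤ ∑ j, Phi S τ t i j * N (v τ j - ystar) := by
  intro i τ t hτt htq
  induction t, hτt using Nat.le_induction generalizing i with
  | base => simp [Phi_self, Matrix.one_apply, ite_mul]
  | succ t ht ih =>
    have htq' : t ≤ q := Nat.le_of_succ_le htq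
    have hSt := hS (t + 1) (Nat.succ_le_succ (Nat.zero_le t)) htq
    have hnn := hSt.1
    set c : Fin m → ℝ := fun j => N (v τ j - ystar) with hc
    have hqe : ∀ (j : Fin m) (x : Fin n → ℝ), N (M j x - ystar) ≤ N (x - ystar) := by
      intro j x
      by_cases hx : M j x = x
      · rw [hx]
      · exact le_of_lt ((hpc j).2 x ystar hx (hy j))
    have key : v (t + 1) i - ystar = ∑ j, S (t + 1) i j • (M j (v t j) - ystar) := by
      rw [hv t (Nat.lt_of_succ_le htq) i]
      have : ystar = ∑ j, S (t + 1) i j • ystar := by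
        rw [← Finset.sum_smul, hSt.2 i, one_smul]
      conv_lhs => rw [this]
      rw [← Finset.sum_sub_distrib]
      simp [smul_sub]
    calc N (v (t + 1) i - ystar)
        ≤ ∑ j, N (S (t + 1) i j • (M j (v t j) - ystar)) := by
          rw [key]; exact normOn_sum hN _ _
      _ = ∑ j, S (t + 1) i j * N (M j (v t j) - ystar) := by
          refine Finset.sum_congr rfl fun j _ => ?_
          rw [hN.2.1, abs_of_nonneg (hnn i j)]
      _ ≤ ∑ j, S (t + 1) i j * (∑ k, Phi S τ t j k * c k) := by
          refine Finset.sum_le_sum fun j _ => ?_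
          exact mul_le_mul_of_nonneg_left
            ((hqe j (v t j)).trans (ih j htq')) (hnn i j)
      _ = ∑ k, Phi S τ (t + 1) i k * c k := by
          rw [Phi_succ S ht]
          simp only [Matrix.mul_apply, Finset.sum_mul, Finset.mul_sum]
          rw [Finset.sum_comm]
          ring_nf
end

section
/- Let M_1, …, M_m : ℝ^n → ℝ^n be paracontractions with respect to a norm ‖·‖ on ℝ^n, let y* be a common fixed point of M_1, …, M_m, and let S(1), …, S(q) be m × m stochastic matrices with entries s_ij(t). For arbitrary v_1(0), …, v_m(0) ∈ ℝ^n define v_i(t+1) = ∑_{j=1}^m s_ij(t+1) M_j(v_j(t)) for 0 ≤ t < q, and define Φ(t,τ) = S(t)S(t−1)⋯S(τ+1) for 0 ≤ τ < t ≤ q with Φ(t,t) = I, writing φ_ij(t,τ) for its entries. Fix i ∈ {1,…,m}. If for every t with 0 ≤ t < q and every j ∈ {1,…,m} it is true that M_j(v_j(t)) = v_j(t) whenever φ_ij(q,t) > 0, then v_i(q) = ∑_{p=1}^m φ_ip(q,0) v_p(0). -/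
open Filter Topology Finset
open scoped ENNReal

lemma foldl_mul_one {m : ℕ} (T : ℕ → Matrix (Fin m) (Fin m) ℝ) :
    ∀ (l : List ℕ) (B : Matrix (Fin m) (Fin m) ℝ),
      l.foldl (fun A k => T k * A) B = l.foldl (fun A k => T k * A) 1 * B
  | [], B => by simp
  | a :: l, B => by
      simp only [List.foldl_cons]
      rw [foldl_mul_one T l (T a * B), foldl_mul_one T l (T a * 1), mul_one, mul_assoc]

lemma Phi_peel {m : ℕ} (S : ℕ → Matrix (Fin m) (Fin m) ℝ) (τ t : ℕ) (h : τ < t) :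
    Phi S τ t = Phi S (τ + 1) t * S (τ + 1) := by
  obtain ⟨d, rfl⟩ : ∃ d, t = τ + 1 + d := ⟨t - (τ + 1), by omega⟩
  unfold Phi
  have h1 : τ + 1 + d - τ = d + 1 := by omega
  have h2 : τ + 1 + d - (τ + 1) = d := by omega
  have hfun : (fun (A : Matrix (Fin m) (Fin m) ℝ) k => S (τ + (k + 1) + 1) * A)
      = fun A k => S (τ + 1 + k + 1) * A := by
    funext A k
    have hk : τ + (k + 1) + 1 = τ + 1 + k + 1 := by omega
    rw [hk]
  rw [h1, h2, List.range_succ_eq_map, List.foldl_cons, List.foldl_map]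
  rw [show (fun (A : Matrix (Fin m) (Fin m) ℝ) k => S (τ + (k + 1) + 1) * A) = fun A k => S (τ + 1 + k + 1) * A from hfun]
  rw [foldl_mul_one (fun k => S (τ + 1 + k + 1)) (List.range d) (S (τ + 1) * 1), mul_one]

theorem stmt18 {n m : ℕ} (N : (Fin n → ℝ) → ℝ) (hN : IsNormOn N)
    (M : Fin m → (Fin n → ℝ) → (Fin n → ℝ))
    (hpc : ∀ i, IsParacontraction N (M i))
    (ystar : Fin n → ℝ) (hy : ∀ i, M i ystar = ystar)
    (q : ℕ) (S : ℕ → Matrix (Fin m) (Fin m) ℝ)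
    (hS : ∀ t, 1 ≤ t → t ≤ q → IsStochastic (S t))
    (v : ℕ → Fin m → Fin n → ℝ)
    (hv : ∀ t, t < q → ∀ i, v (t + 1) i = ∑ j, S (t + 1) i j • M j (v t j))
    (i : Fin m)
    (h : ∀ t, t < q → ∀ j, 0 < Phi S t q i j → M j (v t j) = v t j) :
    v q i = ∑ p, Phi S 0 q i p • v 0 p := by
  have hPhinn : ∀ d τ, τ + d ≤ q → ∀ a b, 0 ≤ Phi S τ (τ + d) a b := by
    intro d
    induction d with
    | zero =>
      intro τ _ a b
      simp only [Nat.add_zero, Phi, Nat.sub_self, List.range_zero, List.foldl_nil,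
        Matrix.one_apply]
      split <;> norm_num
    | succ d ih =>
      intro τ hle a b
      have hpeel := Phi_peel S τ (τ + (d + 1)) (by omega)
      rw [hpeel, Matrix.mul_apply]
      apply Finset.sum_nonneg
      intro k _
      have h1 : 0 ≤ Phi S (τ + 1) (τ + 1 + d) a k := ih (τ + 1) (by omega) a k
      rw [show τ + 1 + d = τ + (d + 1) from by omega] at h1
      exact mul_nonneg h1 ((hS (τ + 1) (by omega) (by omega)).1 k b)
  have key : ∀ d τ, τ + d = q → v q i = ∑ p, Phi S τ q i p • v τ p := by
    intro d
    induction d with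
    | zero =>
      intro τ hτ
      have : τ = q := by omega
      subst this
      simp [Phi, Matrix.one_apply]
    | succ d ih =>
      intro τ hτ
      have hτq : τ < q := by omega
      have hnn : ∀ a b, 0 ≤ Phi S τ q a b := by
        intro a b
        have := hPhinn (q - τ) τ (by omega) a b
        rwa [show τ + (q - τ) = q from by omega] at this
      rw [ih (τ + 1) (by omega)]
      calc ∑ p, Phi S (τ + 1) q i p • v (τ + 1) p
          = ∑ p, Phi S (τ + 1) q i p • ∑ j, S (τ + 1) p j • M j (v τ j) := by
            exact Finset.sum_congr rfl fun p _ => by rw [hv τ hτq p]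
        _ = ∑ j, (∑ p, Phi S (τ + 1) q i p * S (τ + 1) p j) • M j (v τ j) := by
            simp_rw [Finset.smul_sum, smul_smul]
            rw [Finset.sum_comm]
            simp_rw [Finset.sum_smul]
        _ = ∑ j, Phi S τ q i j • M j (v τ j) := by
            exact Finset.sum_congr rfl fun j _ => by
              rw [Phi_peel S τ q hτq, Matrix.mul_apply]
        _ = ∑ j, Phi S τ q i j • v τ j := by
            refine Finset.sum_congr rfl fun j _ => ?_
            rcases (hnn i j).eq_or_lt with heq | hlt
            · rw [← heq, zero_smul, zero_smul]
            · rw [h τ hτq j hlt]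
  have := key q 0 (by omega)
  simpa using this
end
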